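/- arXiv:1107.1700 — 4 statements merged into one kernel-verified Lean document; each statement's English description precedes it below -/
import Mathlib

section
/- Call ζ : Ã → ℂ an elementary Lizorkin test function if ζ(x) = ∏_p ζ_p(x_p), where each ζ_p : ℚ_p → ℂ is locally constant with compact support, there is a prime P such that ζ_p = 1_{ℤ_p} for all primes p > P, and ∫_{ℚ_p} ζ_p dμ_p = 0 for all primes p ≤ P. Then every elementary Lizorkin test function — and hence every finite linear combination of such functions — is a finite ℂ-linear combination of the wavelet functions x ↦ ∏_{q∈S} ψ^{(0)}_{k_q; j_q a_q}(x_q) · ∏_{q∉S} 1_{ℤ_q}(x_q), where S ranges over finite sets of primes and, for q ∈ S, k_q ∈ {1,…,q−1}, j_q ∈ ℤ, a_q ∈ I_q. -/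
open MeasureTheory Complex
open scoped Classical

noncomputable section

variable (p : ℕ) [Fact p.Prime]

instance : MeasurableSpace ℚ_[p] := borel _
instance : BorelSpace ℚ_[p] := ⟨rfl⟩

instance (q : Nat.Primes) : Fact (q : ℕ).Prime := ⟨q.2⟩

/-- The indicator function of `ℤ_p` inside `ℚ_p`. -/
def indZ (x : ℚ_[p]) : ℂ := if ‖x‖ ≤ 1 then 1 else 0

/-- The fractional part of a `p`-adic number: the unique rational `r ∈ ℤ[1/p] ∩ [0,1)`
with `x - r ∈ ℤ_p`. -/
def padicFract (x : ℚ_[p]) : ℚ :=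
  if h : ∃ r : ℚ, (0 ≤ r ∧ r < 1 ∧ ∃ (m : ℤ) (n : ℕ), r = m / p ^ n) ∧ ‖x - (r : ℚ_[p])‖ ≤ 1
  then h.choose else 0

/-- The standard additive character `χ_p` of `ℚ_p`. -/
def padicChar (x : ℚ_[p]) : ℂ := Complex.exp (2 * Real.pi * Complex.I * (padicFract p x : ℂ))

/-- The Kozyrev wavelet `ψ⁰_{k;ja}`. -/
def kozyrev (k : ℕ) (j : ℤ) (a : ℚ_[p]) (x : ℚ_[p]) : ℂ :=
  ((p : ℝ) ^ ((j : ℝ) / 2) : ℝ) *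
    padicChar p ((k : ℚ_[p]) / (p : ℚ_[p]) * ((p : ℚ_[p]) ^ (-j) * x - a)) *
    indZ p ((p : ℚ_[p]) ^ (-j) * x - a)

/-- The set `I_p = ℤ[1/p] ∩ [0,1)` of shifts, viewed inside `ℚ_p`. -/
def Ip : Set ℚ_[p] := {a | ∃ (m n : ℕ), m < p ^ n ∧ a = (m : ℚ_[p]) / (p : ℚ_[p]) ^ n}


/-- The finite adele ring of `ℚ`: the restricted product of the fields `ℚ_p` with respect
to the subrings `ℤ_p`. -/
def FiniteAdele : Type :=
  {x : ∀ q : Nat.Primes, ℚ_[(q : ℕ)] // ∀ᶠ q : Nat.Primes in Filter.cofinite, ‖x q‖ ≤ 1}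

/-- The set of adelic wavelet functions on `Ã`:
`x ↦ ∏_{q ∈ S} ψ⁰_{k_q;j_q a_q}(x_q) ∏_{q ∉ S} 1_{ℤ_q}(x_q)`, for `S` a finite set of
primes, `k_q ∈ {1,…,q-1}`, `j_q ∈ ℤ`, `a_q ∈ I_q`. -/
def waveletSet : Set (FiniteAdele → ℂ) :=
  {f | ∃ c : ∀ q : Nat.Primes,
        Option ({k : ℕ // 1 ≤ k ∧ k ≤ (q : ℕ) - 1} × ℤ × (Ip q)),
      {q : Nat.Primes | c q ≠ none}.Finite ∧
      f = fun x : FiniteAdele => ∏' q : Nat.Primes,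
        (c q).elim (indZ q (x.1 q)) (fun t => kozyrev q t.1 t.2.1 t.2.2 (x.1 q))}

/-- The set of elementary Lizorkin test functions on `Ã`:  products `∏_q ζ_q(x_q)` where
every `ζ_q` is locally constant with compact support, `ζ_q = 1_{ℤ_q}` for all primes
`q > P`, and `∫ ζ_q dμ_q = 0` for all primes `q ≤ P`. -/
def elementaryLizorkinSet (μp : ∀ q : Nat.Primes, MeasureTheory.Measure ℚ_[(q : ℕ)]) :
    Set (FiniteAdele → ℂ) :=
  {f | ∃ ζ : ∀ q : Nat.Primes, ℚ_[(q : ℕ)] → ℂ,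
    (∀ q, IsLocallyConstant (ζ q)) ∧ (∀ q, HasCompactSupport (ζ q)) ∧
    (∃ P : Nat.Primes,
      (∀ q : Nat.Primes, (P : ℕ) < (q : ℕ) → ζ q = fun x => indZ q x) ∧
      (∀ q : Nat.Primes, (q : ℕ) ≤ (P : ℕ) → ∫ x, ζ q x ∂(μp q) = 0)) ∧
    f = fun x : FiniteAdele => ∏' q : Nat.Primes, ζ q (x.1 q)}

section Single

variable {p : ℕ} [hp : Fact p.Prime]

lemma one_lt_pR : (1:ℝ) < (p:ℝ) := by exact_mod_cast hp.out.one_lt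
lemma pR_pos : (0:ℝ) < (p:ℝ) := lt_trans one_pos one_lt_pR
lemma pC_ne : (p:ℂ) ≠ 0 := by exact_mod_cast (Nat.cast_ne_zero (R := ℂ)).2 hp.out.ne_zero

lemma zpow_le_zpow_p {a b : ℤ} (h : a ≤ b) : (p:ℝ)^a ≤ (p:ℝ)^b :=
  zpow_le_zpow_right₀ (le_of_lt one_lt_pR) h

lemma norm_nat_le_one (n : ℕ) : ‖(n : ℚ_[p])‖ ≤ 1 := by
  have := Padic.norm_int_le_one (p := p) (n : ℤ)
  simpa using this

lemma ultra (x y : ℚ_[p]) : ‖x + y‖ ≤ max ‖x‖ ‖y‖ := Padic.nonarchimedean x y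

lemma ultra_le {x y : ℚ_[p]} {r : ℝ} (hx : ‖x‖ ≤ r) (hy : ‖y‖ ≤ r) : ‖x + y‖ ≤ r :=
  le_trans (ultra x y) (max_le hx hy)

lemma ultra_sub {x y z : ℚ_[p]} {r : ℝ} (hx : ‖x - y‖ ≤ r) (hy : ‖y - z‖ ≤ r) :
    ‖x - z‖ ≤ r := by
  have : x - z = (x - y) + (y - z) := by ring
  rw [this]; exact ultra_le hx hy

lemma norm_add_eq_of_lt {x u : ℚ_[p]} (h : ‖u‖ < ‖x‖) : ‖x + u‖ = ‖x‖ := by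
  rw [Padic.add_eq_max_of_ne (ne_of_gt h)]
  exact max_eq_left (le_of_lt h)

/-- approximation of an integral element by a natural number mod `p^n` -/
lemma exists_appr (z : ℚ_[p]) (hz : ‖z‖ ≤ 1) (n : ℕ) :
    ∃ m : ℕ, m < p ^ n ∧ ‖z - (m : ℚ_[p])‖ ≤ (p:ℝ) ^ (-(n:ℤ)) := by
  set Z : ℤ_[p] := ⟨z, hz⟩ with hZ
  refine ⟨Z.appr n, Z.appr_lt n, ?_⟩
  have h1 : ‖Z - (Z.appr n : ℤ_[p])‖ ≤ (p:ℝ) ^ (-(n:ℤ)) := by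
    rw [PadicInt.norm_le_pow_iff_mem_span_pow]
    exact Z.appr_spec n
  have h2 : ((Z - (Z.appr n : ℤ_[p]) : ℤ_[p]) : ℚ_[p]) = z - (Z.appr n : ℚ_[p]) := by
    push_cast [hZ]
    rfl
  rwa [PadicInt.norm_def, h2] at h1

/-- a rational of the form m/p^n with p-adic norm at most one is an integer -/
lemma rat_int (q : ℚ) (m : ℤ) (n : ℕ) (hq : q = (m : ℚ) / (p:ℚ) ^ n)
    (h : ‖(q : ℚ_[p])‖ ≤ 1) : ∃ z : ℤ, (q : ℚ) = (z : ℚ) := by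
  have hpn : ((p:ℚ)^n) ≠ 0 := pow_ne_zero _ (by exact_mod_cast hp.out.ne_zero)
  have hq' : (m : ℚ) = q * (p:ℚ)^n := by rw [hq]; field_simp
  have hnorm : ‖((m : ℤ) : ℚ_[p])‖ ≤ (p:ℝ)^(-(n:ℤ)) := by
    have hcast : ((m : ℤ) : ℚ_[p]) = (q : ℚ_[p]) * ((p:ℚ_[p]))^n := by
      have := congrArg (fun r : ℚ => (r : ℚ_[p])) hq'
      simp only [Rat.cast_mul, Rat.cast_intCast, Rat.cast_pow, Rat.cast_natCast] at this
      exact this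
    rw [hcast, norm_mul, Padic.norm_p_pow]
    calc ‖(q:ℚ_[p])‖ * (p:ℝ)^(-(n:ℤ)) ≤ 1 * (p:ℝ)^(-(n:ℤ)) := by
          apply mul_le_mul_of_nonneg_right h (le_of_lt (zpow_pos pR_pos _))
      _ = (p:ℝ)^(-(n:ℤ)) := one_mul _
  rw [Padic.norm_int_le_pow_iff_dvd] at hnorm
  obtain ⟨z, hz⟩ := hnorm
  refine ⟨z, ?_⟩
  rw [hq, hz]
  push_cast
  rw [mul_comm, mul_div_assoc, div_self hpn, mul_one]

/-- the additive character evaluated near `m / p^n` -/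
lemma padicChar_eq (x : ℚ_[p]) (m n : ℕ)
    (h : ‖x - ((m : ℚ_[p]) / (p:ℚ_[p]) ^ n)‖ ≤ 1) :
    padicChar p x = Complex.exp (2 * Real.pi * Complex.I * ((m : ℂ) / (p:ℂ) ^ n)) := by
  have hpQ : ((p:ℚ)) ≠ 0 := by exact_mod_cast hp.out.ne_zero
  have hpn : ((p:ℚ)^n) ≠ 0 := pow_ne_zero _ hpQ
  have hpQp : ((p:ℚ_[p])^n) ≠ 0 := pow_ne_zero _ (by exact_mod_cast hp.out.ne_zero)
  set r₀ : ℚ := ((m % p ^ n : ℕ) : ℚ) / (p:ℚ) ^ n with hr₀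
  have hmod : (m % p^n) < p ^ n := Nat.mod_lt _ (pow_pos hp.out.pos n)
  have hcastr₀ : ((r₀ : ℚ) : ℚ_[p]) = ((m % p^n : ℕ) : ℚ_[p]) / (p:ℚ_[p]) ^ n := by
    rw [hr₀]; push_cast; ring
  have hint : (((m : ℚ_[p]) / (p:ℚ_[p])^n) - ((r₀ : ℚ) : ℚ_[p])) = ((m / p^n : ℕ) : ℚ_[p]) := by
    rw [hcastr₀, div_sub_div_same, div_eq_iff hpQp]
    have hm : m = p^n * (m / p^n) + m % p^n := (Nat.div_add_mod m (p^n)).symm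
    nth_rewrite 1 [hm]
    push_cast
    ring
  have hx0 : ‖x - ((r₀ : ℚ) : ℚ_[p])‖ ≤ 1 := by
    refine ultra_sub h ?_
    rw [hint]; exact norm_nat_le_one _
  -- the dite condition holds
  have hex : ∃ r : ℚ, (0 ≤ r ∧ r < 1 ∧ ∃ (mi : ℤ) (ni : ℕ), r = mi / p ^ ni) ∧
      ‖x - (r : ℚ_[p])‖ ≤ 1 := by
    refine ⟨r₀, ⟨?_, ?_, ⟨((m % p^n : ℕ) : ℤ), n, by rw [hr₀, Int.cast_natCast]⟩⟩, hx0⟩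
    · rw [hr₀]; positivity
    · rw [hr₀, div_lt_one (by positivity)]
      exact_mod_cast hmod
  obtain ⟨⟨hr0, hr1, mi, ni, hform⟩, hrx⟩ := hex.choose_spec
  rw [padicChar]
  have hfr : padicFract p x = hex.choose := by rw [padicFract, dif_pos hex]
  -- r - m/p^n is an integer
  have hdiff : ∃ z : ℤ, (hex.choose - (m:ℚ)/(p:ℚ)^n : ℚ) = (z : ℚ) := by
    apply rat_int (p := p) (hex.choose - (m:ℚ)/(p:ℚ)^n) (mi * p^n - m * p^ni) (ni + n)
    · rw [hform]
      field_simp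
      push_cast
      ring
    · have : ((hex.choose - (m:ℚ)/(p:ℚ)^n : ℚ) : ℚ_[p]) = (x - ((m:ℚ_[p])/(p:ℚ_[p])^n)) - (x - ((hex.choose:ℚ):ℚ_[p])) := by
        push_cast
        ring
      rw [this, sub_eq_add_neg]
      refine ultra_le h ?_
      rw [norm_neg]; exact hrx
  obtain ⟨z, hz⟩ := hdiff
  have hrC : (hex.choose : ℂ) = (m : ℂ)/(p:ℂ)^n + (z : ℂ) := by
    have h2 := congrArg (fun t : ℚ => (t : ℂ)) hz
    push_cast at h2
    rw [sub_eq_iff_eq_add] at h2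
    rw [h2]; ring
  rw [hfr]
  rw [show (2 * Real.pi * Complex.I * (hex.choose : ℂ)) =
      2 * Real.pi * Complex.I * ((m : ℂ)/(p:ℂ)^n) + (z : ℂ) * (2 * Real.pi * Complex.I) by
    rw [hrC]; ring]
  rw [Complex.exp_add, Complex.exp_int_mul_two_pi_mul_I, mul_one]

lemma norm_scale_le {e f : ℤ} (w : ℚ_[p]) :
    ‖(p:ℚ_[p])^e * w‖ ≤ (p:ℝ)^f ↔ ‖w‖ ≤ (p:ℝ)^(f+e) := by
  rw [norm_mul, Padic.norm_p_zpow]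
  have h : (p:ℝ)^f = (p:ℝ)^(-e) * (p:ℝ)^(f+e) := by
    rw [← zpow_add₀ (ne_of_gt pR_pos)]; congr 1; ring
  rw [h, mul_le_mul_iff_right₀ (zpow_pos pR_pos _)]

lemma exists_Ip (y : ℚ_[p]) : ∃ a : ℚ_[p], a ∈ Ip p ∧ ‖y - a‖ ≤ 1 := by
  obtain ⟨n, hn⟩ := pow_unbounded_of_one_lt ‖y‖ (one_lt_pR (p := p))
  have hz : ‖(p:ℚ_[p])^(n:ℕ) * y‖ ≤ 1 := by
    rw [norm_mul, Padic.norm_p_pow]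
    calc (p:ℝ)^(-(n:ℤ)) * ‖y‖ ≤ (p:ℝ)^(-(n:ℤ)) * (p:ℝ)^(n:ℕ) := by
          apply mul_le_mul_of_nonneg_left (le_of_lt hn) (le_of_lt (zpow_pos pR_pos _))
      _ = 1 := by
          rw [← zpow_natCast (p:ℝ) n, ← zpow_add₀ (ne_of_gt pR_pos)]
          simp
  obtain ⟨m, hmlt, hm⟩ := exists_appr ((p:ℚ_[p])^(n:ℕ) * y) hz n
  refine ⟨(m : ℚ_[p]) / (p:ℚ_[p])^(n:ℕ), ⟨m, n, hmlt, rfl⟩, ?_⟩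
  have hpn : ((p:ℚ_[p])^(n:ℕ)) ≠ 0 := pow_ne_zero _ (by exact_mod_cast hp.out.ne_zero)
  have h : y - (m : ℚ_[p]) / (p:ℚ_[p])^(n:ℕ) =
      ((p:ℚ_[p])^(n:ℕ))⁻¹ * ((p:ℚ_[p])^(n:ℕ) * y - (m:ℚ_[p])) := by
    field_simp
  rw [h, norm_mul, norm_inv, Padic.norm_p_pow]
  calc ((p:ℝ)^(-(n:ℤ)))⁻¹ * ‖(p:ℚ_[p])^(n:ℕ) * y - (m:ℚ_[p])‖
      ≤ ((p:ℝ)^(-(n:ℤ)))⁻¹ * (p:ℝ)^(-(n:ℤ)) := by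
        apply mul_le_mul_of_nonneg_left hm (le_of_lt (inv_pos.2 (zpow_pos pR_pos _)))
    _ = 1 := inv_mul_cancel₀ (ne_of_gt (zpow_pos pR_pos _))

/-- the set of Kozyrev wavelets at one prime -/
def Wset (p : ℕ) [Fact p.Prime] : Set (ℚ_[p] → ℂ) :=
  {f | ∃ (k : ℕ) (j : ℤ) (a : ℚ_[p]), (1 ≤ k ∧ k ≤ p - 1) ∧ a ∈ Ip p ∧ f = kozyrev p k j a}

lemma combo_mem (c : ℚ_[p]) (M : ℤ) :
    (fun x : ℚ_[p] => (p:ℂ) * (if ‖x - c‖ ≤ (p:ℝ)^(-M) then (1:ℂ) else 0)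
      - (if ‖x - c‖ ≤ (p:ℝ)^(1-M) then (1:ℂ) else 0)) ∈ Submodule.span ℂ (Wset p) := by
  set j : ℤ := M - 1 with hj
  obtain ⟨a, haIp, hav⟩ := exists_Ip ((p:ℚ_[p])^(-j) * c)
  set v : ℚ_[p] := (p:ℚ_[p])^(-j) * c - a with hv
  obtain ⟨t, htlt, ht⟩ := exists_appr v hav 1
  set ω : ℂ := Complex.exp (2 * Real.pi * Complex.I * (((t:ℂ)) / (p:ℂ))) with hω
  set coef : ℕ → ℂ := fun k =>
    (((p : ℝ) ^ (-(j : ℝ) / 2) : ℝ) : ℂ) * (ω⁻¹)^k with hcoef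
  have hωne : ω ≠ 0 := Complex.exp_ne_zero _
  have hmain : (fun x : ℚ_[p] => (p:ℂ) * (if ‖x - c‖ ≤ (p:ℝ)^(-M) then (1:ℂ) else 0)
      - (if ‖x - c‖ ≤ (p:ℝ)^(1-M) then (1:ℂ) else 0))
      = ∑ k ∈ Finset.Ico 1 p, coef k • kozyrev p k j a := by
    have hpne : (p:ℚ_[p]) ≠ 0 := by exact_mod_cast hp.out.ne_zero
    have hvle : ‖v‖ ≤ 1 := hav
    have e1 : (0:ℤ) + -j = 1 - M := by rw [hj]; ring
    have e2 : (-1:ℤ) + -j = -M := by rw [hj]; ring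
    funext x
    simp only [Finset.sum_apply, Pi.smul_apply, smul_eq_mul]
    set u : ℚ_[p] := (p:ℚ_[p])^(-j) * x - a with hu
    have huv : u - v = (p:ℚ_[p])^(-j) * (x - c) := by rw [hu, hv]; ring
    have hpar : ‖u - v‖ ≤ (p:ℝ)^(0:ℤ) ↔ ‖x - c‖ ≤ (p:ℝ)^(1-M) := by
      rw [huv, norm_scale_le, e1]
    have hchild : ‖u - v‖ ≤ (p:ℝ)^(-1:ℤ) ↔ ‖x - c‖ ≤ (p:ℝ)^(-M) := by
      rw [huv, norm_scale_le, e2]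
    have hparu : ‖u‖ ≤ 1 ↔ ‖u - v‖ ≤ (p:ℝ)^(0:ℤ) := by
      rw [zpow_zero]
      constructor
      · intro h
        have e : u - v = u + (-v) := by ring
        rw [e]; exact ultra_le h (by rwa [norm_neg])
      · intro h
        have e : u = (u - v) + v := by ring
        rw [e]; exact ultra_le h hvle
    by_cases hU : ‖u‖ ≤ 1
    · -- inside the parent ball
      obtain ⟨s, hslt, hs⟩ := exists_appr u hU 1
      have hslt' : s < p := by simpa using hslt
      have hs' : ‖u - (s:ℚ_[p])‖ ≤ (p:ℝ)^(-1:ℤ) := by exact_mod_cast hs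
      have ht' : ‖v - (t:ℚ_[p])‖ ≤ (p:ℝ)^(-1:ℤ) := by exact_mod_cast ht
      have htlt' : t < p := by simpa using htlt
      have hparT : ‖x - c‖ ≤ (p:ℝ)^(1-M) := hpar.1 (hparu.1 hU)
      have hchild2 : (‖x - c‖ ≤ (p:ℝ)^(-M)) ↔ s = t := by
        rw [← hchild]
        constructor
        · intro h
          have h1 : ‖(s:ℚ_[p]) - (t:ℚ_[p])‖ ≤ (p:ℝ)^(-1:ℤ) := by
            have e : (s:ℚ_[p]) - t = (-(u - (s:ℚ_[p]))) + ((u - v) + (v - t)) := by ring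
            rw [e]
            exact ultra_le (by rwa [norm_neg]) (ultra_le h ht')
          have h2 : ((p:ℤ)^1) ∣ ((s:ℤ) - t) := by
            rw [← Padic.norm_int_le_pow_iff_dvd]
            push_cast
            exact_mod_cast h1
          rw [pow_one] at h2
          have h3 : p ∣ ((s:ℤ) - t).natAbs :=
            Int.natCast_dvd_natCast.mp ((Int.dvd_natAbs).2 h2)
          have h4 : ((s:ℤ) - t).natAbs < p := by omega
          have h5 := Nat.eq_zero_of_dvd_of_lt h3 h4
          omega
        · intro h
          subst h
          have e : u - v = (u - (s:ℚ_[p])) + (-(v - (s:ℚ_[p]))) := by ring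
          rw [e]
          exact ultra_le hs' (by rwa [norm_neg])
      set θ : ℂ := Complex.exp (2 * Real.pi * Complex.I * ((s:ℂ) / (p:ℂ))) * ω⁻¹ with hθ
      have hterm : ∀ k ∈ Finset.Ico 1 p, coef k * kozyrev p k j a x = θ^k := by
        intro k hk
        have hindZ : indZ p u = 1 := by rw [indZ, if_pos hU]
        have hchar : padicChar p ((k:ℚ_[p]) / (p:ℚ_[p]) * u)
            = Complex.exp (2 * Real.pi * Complex.I * (((k*s : ℕ) : ℂ) / (p:ℂ)^1)) := by
          apply padicChar_eq
          have e : (k:ℚ_[p])/(p:ℚ_[p]) * u - ((k*s : ℕ):ℚ_[p])/(p:ℚ_[p])^1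
              = (k:ℚ_[p])/(p:ℚ_[p]) * (u - (s:ℚ_[p])) := by push_cast; field_simp
          have h1 : ‖(k:ℚ_[p])‖ ≤ 1 := norm_nat_le_one k
          have h2 : ‖u - (s:ℚ_[p])‖ ≤ (p:ℝ)⁻¹ := by rw [← zpow_neg_one]; exact hs'
          rw [e, norm_mul, norm_div, Padic.norm_p, div_eq_mul_inv, inv_inv]
          calc ‖(k:ℚ_[p])‖ * (p:ℝ) * ‖u - (s:ℚ_[p])‖
              ≤ 1 * (p:ℝ) * (p:ℝ)⁻¹ := by
                apply mul_le_mul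
                · exact mul_le_mul_of_nonneg_right h1 (le_of_lt pR_pos)
                · exact h2
                · exact norm_nonneg _
                · positivity
            _ = 1 := by rw [one_mul]; exact mul_inv_cancel₀ (ne_of_gt pR_pos)
        have hexp : Complex.exp (2 * Real.pi * Complex.I * (((k*s : ℕ) : ℂ) / (p:ℂ)^1))
            = (Complex.exp (2 * Real.pi * Complex.I * ((s:ℂ) / (p:ℂ))))^k := by
          rw [← Complex.exp_nat_mul]
          congr 1
          push_cast
          ring
        rw [kozyrev, ← hu, hindZ, hchar, hexp, hcoef]
        have hcast1 : (((p:ℝ)^(-(j:ℝ)/2) : ℝ) : ℂ) * (((p:ℝ)^((j:ℝ)/2) : ℝ) : ℂ) = 1 := by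
          rw [← Complex.ofReal_mul, ← Real.rpow_add pR_pos,
            show -(j:ℝ)/2 + (j:ℝ)/2 = 0 by ring, Real.rpow_zero, Complex.ofReal_one]
        calc (((p:ℝ)^(-(j:ℝ)/2) : ℝ) : ℂ) * (ω⁻¹)^k
              * ((((p:ℝ)^((j:ℝ)/2) : ℝ) : ℂ)
                * Complex.exp (2 * Real.pi * Complex.I * ((s:ℂ)/(p:ℂ)))^k * 1)
            = ((((p:ℝ)^(-(j:ℝ)/2) : ℝ) : ℂ) * (((p:ℝ)^((j:ℝ)/2) : ℝ) : ℂ))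
              * (Complex.exp (2 * Real.pi * Complex.I * ((s:ℂ)/(p:ℂ)))^k * (ω⁻¹)^k) := by
              ring
          _ = θ^k := by rw [hcast1, one_mul, hθ, mul_pow]
      rw [Finset.sum_congr rfl hterm]
      by_cases hst : s = t
      · rw [if_pos (hchild2.2 hst), if_pos hparT]
        have hθ1 : θ = 1 := by
          rw [hθ, hω, hst]
          exact mul_inv_cancel₀ (Complex.exp_ne_zero _)
        rw [hθ1]
        simp only [one_pow, Finset.sum_const, Nat.card_Ico, nsmul_eq_mul, mul_one]
        rw [Nat.cast_sub hp.out.one_lt.le]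
        push_cast
        ring
      · rw [if_neg (fun h => hst (hchild2.1 h)), if_pos hparT]
        have h2πI : (2 * (Real.pi:ℂ) * Complex.I) ≠ 0 :=
          mul_ne_zero (mul_ne_zero two_ne_zero (Complex.ofReal_ne_zero.2 Real.pi_ne_zero))
            Complex.I_ne_zero
        have hθp : θ^p = 1 := by
          rw [hθ, mul_pow, ← Complex.exp_nat_mul, inv_pow, ← Complex.exp_nat_mul]
          have hpC : (p:ℂ) ≠ 0 := pC_ne
          have ea : (p:ℂ) * (2 * Real.pi * Complex.I * ((s:ℂ)/(p:ℂ))) = (s:ℂ) * (2 * Real.pi * Complex.I) := by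
            field_simp
          have eb : (p:ℂ) * (2 * Real.pi * Complex.I * ((t:ℂ)/(p:ℂ))) = (t:ℂ) * (2 * Real.pi * Complex.I) := by
            field_simp
          rw [ea, eb, Complex.exp_nat_mul_two_pi_mul_I, Complex.exp_nat_mul_two_pi_mul_I]
          simp
        have hθne : θ ≠ 1 := by
          intro h1
          have hθe : θ = Complex.exp (2 * Real.pi * Complex.I * ((s:ℂ)/(p:ℂ))
              - 2 * Real.pi * Complex.I * ((t:ℂ)/(p:ℂ))) := by
            rw [Complex.exp_sub, hθ, hω]
            exact (div_eq_mul_inv _ _).symm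
          rw [hθe, Complex.exp_eq_one_iff] at h1
          obtain ⟨n, hn⟩ := h1
          have hpC : (p:ℂ) ≠ 0 := pC_ne
          have hC : (s:ℂ) - (t:ℂ) = (n:ℂ) * (p:ℂ) := by
            have h2 : (2 * (Real.pi:ℂ) * Complex.I) * (((s:ℂ) - (t:ℂ)) / (p:ℂ))
                = (2 * (Real.pi:ℂ) * Complex.I) * (n:ℂ) := by
              linear_combination hn
            have h3 := mul_left_cancel₀ h2πI h2
            rwa [div_eq_iff hpC] at h3
          have hZ : (s:ℤ) - (t:ℤ) = n * p := by exact_mod_cast hC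
          have hdvd : ((p:ℤ)) ∣ ((s:ℤ) - t) := ⟨n, by linarith⟩
          have h3 : p ∣ ((s:ℤ) - t).natAbs :=
            Int.natCast_dvd_natCast.mp ((Int.dvd_natAbs).2 hdvd)
          have h4 : ((s:ℤ) - t).natAbs < p := by omega
          have h5 := Nat.eq_zero_of_dvd_of_lt h3 h4
          omega
        have hgeom : ∑ k ∈ Finset.range p, θ^k = 0 := by
          rw [geom_sum_eq hθne, hθp, sub_self, zero_div]
        have hsplit : ∑ k ∈ Finset.range p, θ^k = θ^0 + ∑ k ∈ Finset.Ico 1 p, θ^k := by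
          rw [Finset.range_eq_Ico]
          exact Finset.sum_eq_sum_Ico_succ_bot hp.out.pos _
        rw [hsplit, pow_zero] at hgeom
        have hIco : ∑ k ∈ Finset.Ico 1 p, θ^k = -1 := by linear_combination hgeom
        rw [hIco]
        ring
    · -- outside the parent ball
      have hnpar : ¬ (‖x - c‖ ≤ (p:ℝ)^(1-M)) := fun h => hU (hparu.2 (hpar.2 h))
      have hnchild : ¬ (‖x - c‖ ≤ (p:ℝ)^(-M)) := fun h =>
        hnpar (le_trans h (zpow_le_zpow_p (by omega)))
      rw [if_neg hnpar, if_neg hnchild]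
      have hz : ∀ k ∈ Finset.Ico 1 p, coef k * kozyrev p k j a x = 0 := by
        intro k hk
        have hindZ : indZ p u = 0 := by rw [indZ, if_neg hU]
        rw [kozyrev, ← hu, hindZ, mul_zero, mul_zero]
      rw [Finset.sum_congr rfl hz, Finset.sum_const, smul_zero]
      ring
  rw [hmain]
  apply Submodule.sum_mem
  intro k hk
  apply Submodule.smul_mem
  apply Submodule.subset_span
  rw [Finset.mem_Ico] at hk
  exact ⟨k, j, a, ⟨hk.1, Nat.le_sub_one_of_lt hk.2⟩, haIp, rfl⟩

lemma nat_eq_of_dvd {K m m' : ℕ} (hm : m < K) (hm' : m' < K)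
    (h : ((K:ℤ)) ∣ ((m:ℤ) - m')) : m = m' := by
  have h3 : K ∣ ((m:ℤ) - m').natAbs := Int.natCast_dvd_natCast.mp ((Int.dvd_natAbs).2 h)
  by_cases hne : ((m:ℤ) - m').natAbs = 0
  · omega
  · have := Nat.le_of_dvd (Nat.pos_of_ne_zero hne) h3
    omega

lemma c_dvd_iff (N : ℤ) (m m' n : ℕ) :
    ‖(m:ℚ_[p]) * (p:ℚ_[p])^(-N) - (m':ℚ_[p]) * (p:ℚ_[p])^(-N)‖ ≤ (p:ℝ)^(-(n:ℤ) + N)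
      ↔ ((p:ℤ)^n) ∣ ((m:ℤ) - m') := by
  have e : (m:ℚ_[p]) * (p:ℚ_[p])^(-N) - (m':ℚ_[p]) * (p:ℚ_[p])^(-N)
      = (p:ℚ_[p])^(-N) * ((((m:ℤ) - (m':ℤ)) : ℤ) : ℚ_[p]) := by push_cast; ring
  rw [e, norm_scale_le, show (-(n:ℤ) + N) + -N = -(n:ℤ) by ring]
  exact Padic.norm_int_le_pow_iff_dvd _ _

lemma sum_range_zmod [NeZero p] (h : ZMod p → ℂ) :
    ∑ r ∈ Finset.range p, h ((r : ZMod p)) = ∑ m : ZMod p, h m := by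
  apply Finset.sum_nbij' (i := fun (r : ℕ) => (r : ZMod p)) (j := fun (m : ZMod p) => m.val)
  · intro a ha
    exact Finset.mem_univ _
  · intro m hm
    exact Finset.mem_range.2 (ZMod.val_lt m)
  · intro a ha
    rw [ZMod.val_natCast, Nat.mod_eq_of_lt (Finset.mem_range.1 ha)]
  · intro m hm
    exact ZMod.natCast_rightInverse m
  · intro a ha
    rfl

lemma sum_shift {M : ℤ} {ζ : ℚ_[p] → ℂ}
    (hconst : ∀ x y : ℚ_[p], ‖x - y‖ ≤ (p:ℝ)^(-M) → ζ x = ζ y)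
    {x y : ℚ_[p]} (hxy : ‖x - y‖ ≤ (p:ℝ)^(1-M)) :
    ∑ r ∈ Finset.range p, ζ (y + (r:ℚ_[p]) * (p:ℚ_[p])^(M-1))
      = ∑ r ∈ Finset.range p, ζ (x + (r:ℚ_[p]) * (p:ℚ_[p])^(M-1)) := by
  haveI : NeZero p := ⟨hp.out.ne_zero⟩
  have hpne : (p:ℚ_[p]) ≠ 0 := by exact_mod_cast hp.out.ne_zero
  set g : ZMod p → ℂ := fun m => ζ (x + ((m.val : ℕ):ℚ_[p]) * (p:ℚ_[p])^(M-1)) with hg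
  have hstep : ∀ w : ℚ_[p], ∀ n : ℕ, ‖w - (n:ℚ_[p])‖ ≤ (p:ℝ)^(-1:ℤ) →
      ζ (x + w * (p:ℚ_[p])^(M-1)) = g ((n : ZMod p)) := by
    intro w n hn
    rw [hg]
    apply hconst
    have hval : ((n : ZMod p)).val = n % p := ZMod.val_natCast p n
    have hnv : ‖w - (((n : ZMod p).val : ℕ) : ℚ_[p])‖ ≤ (p:ℝ)^(-1:ℤ) := by
      rw [hval]
      have e : w - ((n % p : ℕ) : ℚ_[p]) = (w - n) + ((n:ℚ_[p]) - ((n % p : ℕ) : ℚ_[p])) := by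
        ring
      rw [e]
      refine ultra_le hn ?_
      have e2 : (n:ℚ_[p]) - ((n % p : ℕ):ℚ_[p]) = (p:ℚ_[p]) * ((n / p : ℕ) : ℚ_[p]) := by
        have h4 : n = p * (n / p) + n % p := (Nat.div_add_mod n p).symm
        calc (n:ℚ_[p]) - ((n%p:ℕ):ℚ_[p])
            = ((p * (n/p) + n % p : ℕ):ℚ_[p]) - ((n%p:ℕ):ℚ_[p]) := by rw [← h4]
          _ = (p:ℚ_[p]) * ((n/p : ℕ):ℚ_[p]) := by push_cast; ring
      rw [e2, norm_mul, Padic.norm_p]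
      calc (p:ℝ)⁻¹ * ‖((n/p:ℕ):ℚ_[p])‖ ≤ (p:ℝ)⁻¹ * 1 :=
            mul_le_mul_of_nonneg_left (norm_nat_le_one _) (by positivity)
        _ = (p:ℝ)^(-1:ℤ) := by rw [mul_one, zpow_neg_one]
    have e3 : x + w * (p:ℚ_[p])^(M-1) - (x + (((n:ZMod p).val : ℕ):ℚ_[p]) * (p:ℚ_[p])^(M-1))
        = (p:ℚ_[p])^(M-1) * (w - (((n:ZMod p).val : ℕ):ℚ_[p])) := by ring
    rw [e3]
    refine (norm_scale_le _).mpr ?_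
    rw [show -M + (M - 1) = (-1:ℤ) by ring]
    exact hnv
  -- w₀ : the shift between x and y
  set w₀ : ℚ_[p] := (p:ℚ_[p])^(-(M-1)) * (y - x) with hw₀def
  have hy : y = x + w₀ * (p:ℚ_[p])^(M-1) := by
    rw [hw₀def]
    have hcancel : (p:ℚ_[p])^(-(M-1)) * (p:ℚ_[p])^(M-1) = 1 := by
      rw [← zpow_add₀ hpne]; simp
    calc y = x + ((p:ℚ_[p])^(-(M-1)) * (p:ℚ_[p])^(M-1)) * (y - x) := by rw [hcancel]; ring
      _ = x + (p:ℚ_[p])^(-(M-1)) * (y - x) * (p:ℚ_[p])^(M-1) := by ring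
  have hw₀ : ‖w₀‖ ≤ 1 := by
    rw [hw₀def]
    have := (norm_scale_le (p := p) (e := -(M-1)) (f := 0) (y - x)).mpr
    rw [zpow_zero] at this
    apply this
    rw [show (0:ℤ) + -(M-1) = 1 - M by ring, ← norm_neg, neg_sub]
    exact hxy
  obtain ⟨s, hslt, hsw⟩ := exists_appr w₀ hw₀ 1
  have hsw' : ‖w₀ - (s:ℚ_[p])‖ ≤ (p:ℝ)^(-1:ℤ) := by exact_mod_cast hsw
  have hysum : ∀ r : ℕ, ζ (y + (r:ℚ_[p]) * (p:ℚ_[p])^(M-1)) = g (((s + r : ℕ) : ZMod p)) := by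
    intro r
    have e : y + (r:ℚ_[p]) * (p:ℚ_[p])^(M-1) = x + (w₀ + (r:ℚ_[p])) * (p:ℚ_[p])^(M-1) := by
      rw [hy]; ring
    rw [e]
    apply hstep
    have e2 : (w₀ + (r:ℚ_[p])) - ((s + r : ℕ):ℚ_[p]) = w₀ - (s:ℚ_[p]) := by push_cast; ring
    rw [e2]
    exact hsw'
  have hxsum : ∀ r : ℕ, ζ (x + (r:ℚ_[p]) * (p:ℚ_[p])^(M-1)) = g ((r : ZMod p)) := by
    intro r
    apply hstep
    rw [sub_self, norm_zero]
    positivity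
  calc ∑ r ∈ Finset.range p, ζ (y + (r:ℚ_[p]) * (p:ℚ_[p])^(M-1))
      = ∑ r ∈ Finset.range p, g (((s:ZMod p) + (r:ZMod p))) := by
        refine Finset.sum_congr rfl (fun r _ => ?_)
        rw [hysum r]
        congr 1
        push_cast
        ring
    _ = ∑ m : ZMod p, g ((s:ZMod p) + m) := sum_range_zmod (fun m => g ((s:ZMod p) + m))
    _ = ∑ m : ZMod p, g m := Equiv.sum_comp (Equiv.addLeft (s : ZMod p)) g
    _ = ∑ r ∈ Finset.range p, g ((r : ZMod p)) := (sum_range_zmod _).symm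
    _ = ∑ r ∈ Finset.range p, ζ (x + (r:ℚ_[p]) * (p:ℚ_[p])^(M-1)) := by
        refine Finset.sum_congr rfl (fun r _ => (hxsum r).symm)

lemma ball_isCompact (N : ℤ) : IsCompact {x : ℚ_[p] | ‖x‖ ≤ (p:ℝ)^N} := by
  have h : {x : ℚ_[p] | ‖x‖ ≤ (p:ℝ)^N} = Metric.closedBall 0 ((p:ℝ)^N) := by
    ext x; simp [Metric.mem_closedBall, dist_zero_right]
  rw [h]; exact isCompact_closedBall _ _

lemma ball_isOpen (N : ℤ) : IsOpen {x : ℚ_[p] | ‖x‖ ≤ (p:ℝ)^N} := by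
  have h : {x : ℚ_[p] | ‖x‖ ≤ (p:ℝ)^N} = Metric.ball 0 ((p:ℝ)^(N+1)) := by
    ext x
    simp only [Set.mem_setOf_eq, Metric.mem_ball, dist_zero_right]
    exact Padic.norm_le_pow_iff_norm_lt_pow_add_one x N
  rw [h]; exact Metric.isOpen_ball

lemma key_induction (μ : Measure ℚ_[p]) [μ.IsAddHaarMeasure] :
    ∀ (e : ℕ) (N M : ℤ), M + N = (e:ℤ) → ∀ ζ : ℚ_[p] → ℂ,
      (∀ x, (p:ℝ)^N < ‖x‖ → ζ x = 0) →
      (∀ x y : ℚ_[p], ‖x - y‖ ≤ (p:ℝ)^(-M) → ζ x = ζ y) →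
      (∫ x, ζ x ∂μ) = 0 → ζ ∈ Submodule.span ℂ (Wset p) := by
  intro e
  induction e with
  | zero =>
    intro N M hMN ζ hsupp hconst hint
    have hζeq : ζ = Set.indicator {x : ℚ_[p] | ‖x‖ ≤ (p:ℝ)^N} (fun _ => ζ 0) := by
      funext x
      by_cases hx : ‖x‖ ≤ (p:ℝ)^N
      · rw [Set.indicator_of_mem (show x ∈ {x : ℚ_[p] | ‖x‖ ≤ (p:ℝ)^N} from hx)]
        apply hconst
        rw [sub_zero, show -M = N by omega]
        exact hx
      · rw [Set.indicator_of_notMem (show x ∉ {x : ℚ_[p] | ‖x‖ ≤ (p:ℝ)^N} from hx)]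
        exact hsupp x (lt_of_not_ge hx)
    have h0 : ζ 0 = 0 := by
      rw [hζeq] at hint
      rw [integral_indicator_const _ ((ball_isOpen N).measurableSet)] at hint
      rcases smul_eq_zero.mp hint with h | h
      · exfalso
        have hpos : 0 < μ {x : ℚ_[p] | ‖x‖ ≤ (p:ℝ)^N} :=
          (ball_isOpen N).measure_pos μ ⟨0, by
            show ‖(0:ℚ_[p])‖ ≤ (p:ℝ)^N
            rw [norm_zero]
            positivity⟩
        have hfin : μ {x : ℚ_[p] | ‖x‖ ≤ (p:ℝ)^N} < ⊤ := (ball_isCompact N).measure_lt_top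
        have hpos' := ENNReal.toReal_pos (ne_of_gt hpos) (ne_of_lt hfin)
        rw [← measureReal_def, h] at hpos'
        exact lt_irrefl _ hpos'
      · exact h
    rw [hζeq, h0]
    have hzero : Set.indicator {x : ℚ_[p] | ‖x‖ ≤ (p:ℝ)^N} (fun _ => (0:ℂ)) = (0 : ℚ_[p] → ℂ) := by
      funext x; simp
    rw [hzero]
    exact Submodule.zero_mem _
  | succ e ih =>
    intro N M hMN ζ hsupp hconst hint
    haveI : NeZero p := ⟨hp.out.ne_zero⟩
    have hpne : (p:ℚ_[p]) ≠ 0 := by exact_mod_cast hp.out.ne_zero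
    have hpC : (p:ℂ) ≠ 0 := pC_ne
    have hζlc : IsLocallyConstant ζ := by
      rw [IsLocallyConstant.iff_eventually_eq]
      intro x
      rw [Metric.eventually_nhds_iff]
      exact ⟨(p:ℝ)^(-M), zpow_pos pR_pos _,
        fun {y} hy => hconst y x (by rw [← dist_eq_norm]; exact le_of_lt hy)⟩
    have hζcont : Continuous ζ := hζlc.continuous
    have hζcs : HasCompactSupport ζ :=
      HasCompactSupport.intro (ball_isCompact N) (fun x hx => hsupp x (lt_of_not_ge hx))
    have hζint : Integrable ζ μ := hζcont.integrable_of_hasCompactSupport hζcs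
    set η : ℚ_[p] → ℂ :=
      fun x => (p:ℂ)⁻¹ * ∑ r ∈ Finset.range p, ζ (x + (r:ℚ_[p]) * (p:ℚ_[p])^(M-1)) with hη
    have hshiftnorm : ∀ r : ℕ, ‖(r:ℚ_[p]) * (p:ℚ_[p])^(M-1)‖ ≤ (p:ℝ)^(1-M) := by
      intro r
      rw [norm_mul, Padic.norm_p_zpow]
      calc ‖(r:ℚ_[p])‖ * (p:ℝ)^(-(M-1))
          ≤ 1 * (p:ℝ)^(-(M-1)) :=
            mul_le_mul_of_nonneg_right (norm_nat_le_one r) (le_of_lt (zpow_pos pR_pos _))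
        _ = (p:ℝ)^(1-M) := by rw [one_mul]; congr 1; ring
    have hηsupp : ∀ x, (p:ℝ)^N < ‖x‖ → η x = 0 := by
      intro x hx
      have hz : ∀ r ∈ Finset.range p, ζ (x + (r:ℚ_[p]) * (p:ℚ_[p])^(M-1)) = 0 := by
        intro r hr
        apply hsupp
        have hlt : ‖(r:ℚ_[p]) * (p:ℚ_[p])^(M-1)‖ < ‖x‖ :=
          lt_of_le_of_lt (le_trans (hshiftnorm r) (zpow_le_zpow_p (by omega))) hx
        rw [norm_add_eq_of_lt hlt]
        exact hx
      show (p:ℂ)⁻¹ * _ = 0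
      rw [Finset.sum_congr rfl hz, Finset.sum_const, smul_zero, mul_zero]
    have hηconst : ∀ x y : ℚ_[p], ‖x - y‖ ≤ (p:ℝ)^(-(M-1)) → η x = η y := by
      intro x y hxy
      show (p:ℂ)⁻¹ * _ = (p:ℂ)⁻¹ * _
      congr 1
      exact sum_shift hconst (x := y) (y := x)
        (by rw [norm_sub_rev, show (1:ℤ)-M = -(M-1) by ring]; exact hxy)
    have hηint : (∫ x, η x ∂μ) = 0 := by
      have hη2 : (∫ x, η x ∂μ)
          = (p:ℂ)⁻¹ * ∫ x, (∑ r ∈ Finset.range p, ζ (x + (r:ℚ_[p]) * (p:ℚ_[p])^(M-1))) ∂μ := by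
        rw [← integral_const_mul]
      rw [hη2, integral_finset_sum _ (fun r _ => hζint.comp_add_right _)]
      have hz : ∀ r ∈ Finset.range p,
          (∫ x, ζ (x + (r:ℚ_[p]) * (p:ℚ_[p])^(M-1)) ∂μ) = 0 := by
        intro r _
        rw [integral_add_right_eq_self]
        exact hint
      rw [Finset.sum_congr rfl hz, Finset.sum_const, smul_zero, mul_zero]
    have hηspan : η ∈ Submodule.span ℂ (Wset p) :=
      ih N (M-1) (by omega) η hηsupp hηconst hηint
    set c : ℕ → ℚ_[p] := fun m => (m:ℚ_[p]) * (p:ℚ_[p])^(-N) with hc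
    have hdecomp : ζ = η + ∑ m ∈ Finset.range (p^(e+1)), ((p:ℂ)⁻¹ * ζ (c m)) •
        (fun x : ℚ_[p] => (p:ℂ) * (if ‖x - c m‖ ≤ (p:ℝ)^(-M) then (1:ℂ) else 0)
          - (if ‖x - c m‖ ≤ (p:ℝ)^(1-M) then (1:ℂ) else 0)) := by
      funext x
      simp only [Pi.add_apply, Finset.sum_apply, Pi.smul_apply, smul_eq_mul]
      have hcnorm : ∀ m : ℕ, ‖c m‖ ≤ (p:ℝ)^N := by
        intro m
        rw [hc]
        simp only []
        rw [norm_mul, Padic.norm_p_zpow, neg_neg]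
        calc ‖(m:ℚ_[p])‖ * (p:ℝ)^N ≤ 1 * (p:ℝ)^N :=
              mul_le_mul_of_nonneg_right (norm_nat_le_one m) (le_of_lt (zpow_pos pR_pos _))
          _ = (p:ℝ)^N := one_mul _
      by_cases hx : ‖x‖ ≤ (p:ℝ)^N
      · -- x in the big ball
        have hz1 : ‖(p:ℚ_[p])^(N) * x‖ ≤ 1 := by
          have h := (norm_scale_le (p := p) (e := N) (f := 0) x).mpr
          rw [zpow_zero] at h
          exact h (by rw [show (0:ℤ) + N = N by ring]; exact hx)
        obtain ⟨m₀, hm₀lt, hm₀⟩ := exists_appr ((p:ℚ_[p])^(N) * x) hz1 (e+1)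
        have hcan : (p:ℚ_[p])^(-N) * (p:ℚ_[p])^N = 1 := by
          rw [← zpow_add₀ hpne]; simp
        have hxc : ‖x - c m₀‖ ≤ (p:ℝ)^(-M) := by
          have e4 : x - c m₀ = (p:ℚ_[p])^(-N) * ((p:ℚ_[p])^(N) * x - (m₀:ℚ_[p])) := by
            rw [hc]
            simp only []
            calc x - (m₀:ℚ_[p]) * (p:ℚ_[p])^(-N)
                = ((p:ℚ_[p])^(-N) * (p:ℚ_[p])^N) * x - (m₀:ℚ_[p]) * (p:ℚ_[p])^(-N) := by
                  rw [hcan, one_mul]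
              _ = (p:ℚ_[p])^(-N) * ((p:ℚ_[p])^(N) * x - (m₀:ℚ_[p])) := by ring
          rw [e4]
          refine (norm_scale_le _).mpr ?_
          rw [show -M + -N = -(((e+1):ℕ):ℤ) by push_cast; omega]
          exact hm₀
        have hdvd_iff : ∀ (m m' : ℕ) (n : ℕ) (f : ℤ), f = -(n:ℤ) + N →
            (‖c m - c m'‖ ≤ (p:ℝ)^f ↔ ((p:ℤ)^n) ∣ ((m:ℤ) - m')) := by
          intro m m' n f hf
          rw [hc]
          simp only []
          rw [hf]
          exact c_dvd_iff N m m' n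
        -- the A-sum
        have hA : ∑ m ∈ Finset.range (p^(e+1)),
            ζ (c m) * (if ‖x - c m‖ ≤ (p:ℝ)^(-M) then (1:ℂ) else 0) = ζ x := by
          rw [Finset.sum_eq_single_of_mem m₀ (Finset.mem_range.2 hm₀lt)]
          · rw [if_pos hxc, mul_one]
            exact hconst (c m₀) x (by rw [norm_sub_rev]; exact hxc)
          · intro m hm hne
            rw [if_neg, mul_zero]
            intro h
            apply hne
            have hdiff : ‖c m - c m₀‖ ≤ (p:ℝ)^(-M) := by
              have e5 : c m - c m₀ = (-(x - c m)) + (x - c m₀) := by ring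
              rw [e5]
              exact ultra_le (by rwa [norm_neg]) hxc
            have hdvd : ((p:ℤ)^(e+1)) ∣ ((m:ℤ) - m₀) :=
              (hdvd_iff m m₀ (e+1) (-M) (by push_cast; omega)).mp hdiff
            exact nat_eq_of_dvd (Finset.mem_range.1 hm) hm₀lt (by
              have : ((p^(e+1) : ℕ) : ℤ) = (p:ℤ)^(e+1) := by push_cast; ring
              rw [this]
              exact hdvd)
        -- the B-sum
        have hB : ∑ m ∈ Finset.range (p^(e+1)),
            ζ (c m) * (if ‖x - c m‖ ≤ (p:ℝ)^(1-M) then (1:ℂ) else 0)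
            = ∑ r ∈ Finset.range p, ζ (x + (r:ℚ_[p]) * (p:ℚ_[p])^(M-1)) := by
          have hpepos : 0 < p^e := pow_pos hp.out.pos e
          have hre : ∑ m ∈ Finset.range (p^(e+1)),
              ζ (c m) * (if ‖x - c m‖ ≤ (p:ℝ)^(1-M) then (1:ℂ) else 0)
              = ∑ q ∈ Finset.range (p^e) ×ˢ Finset.range p,
                ζ (c (q.1 + p^e * q.2)) *
                  (if ‖x - c (q.1 + p^e * q.2)‖ ≤ (p:ℝ)^(1-M) then (1:ℂ) else 0) := by
            apply Finset.sum_nbij' (i := fun m => (m % p^e, m / p^e))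
              (j := fun q => q.1 + p^e * q.2)
            · intro m hm
              rw [Finset.mem_product]
              refine ⟨Finset.mem_range.2 (Nat.mod_lt _ hpepos), Finset.mem_range.2 ?_⟩
              rw [Nat.div_lt_iff_lt_mul hpepos]
              have h8 := Finset.mem_range.1 hm
              rw [pow_succ] at h8
              rw [mul_comm]
              exact h8
            · intro q hq
              rw [Finset.mem_product] at hq
              have h1 := Finset.mem_range.1 hq.1
              have h2 := Finset.mem_range.1 hq.2
              rw [Finset.mem_range, pow_succ]
              calc q.1 + p^e * q.2 < p^e + p^e * q.2 := by omega
                _ = p^e * (q.2 + 1) := by ring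
                _ ≤ p^e * p := Nat.mul_le_mul_left _ (by omega)
            · intro m hm
              exact Nat.mod_add_div m (p^e)
            · intro q hq
              rw [Finset.mem_product] at hq
              have h1 := Finset.mem_range.1 hq.1
              ext
              · show (q.1 + p^e * q.2) % p^e = q.1
                rw [Nat.add_mul_mod_self_left, Nat.mod_eq_of_lt h1]
              · show (q.1 + p^e * q.2) / p^e = q.2
                rw [Nat.add_mul_div_left _ _ hpepos, Nat.div_eq_of_lt h1, zero_add]
            · intro m hm
              rw [Nat.mod_add_div m (p^e)]
          rw [hre, Finset.sum_product]
          set b := m₀ % p^e with hb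
          have hbmem : b ∈ Finset.range (p^e) := Finset.mem_range.2 (Nat.mod_lt _ hpepos)
          have hm₀b : ((p:ℤ)^e) ∣ ((m₀:ℤ) - b) := by
            refine ⟨((m₀ / p^e : ℕ) : ℤ), ?_⟩
            have h5 : b + p^e * (m₀ / p^e) = m₀ := Nat.mod_add_div m₀ (p^e)
            have h6 : (m₀:ℤ) = (b:ℤ) + (p:ℤ)^e * ((m₀/p^e : ℕ):ℤ) := by exact_mod_cast h5.symm
            linarith
          have hxcb : ‖x - c b‖ ≤ (p:ℝ)^(1-M) := by
            have h1 : ‖c m₀ - c b‖ ≤ (p:ℝ)^(1-M) :=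
              (hdvd_iff m₀ b e (1-M) (by push_cast; omega)).mpr hm₀b
            exact ultra_sub (le_trans hxc (zpow_le_zpow_p (by omega))) h1
          have hcsplit : ∀ i r : ℕ, c (i + p^e * r) = c i + (r:ℚ_[p]) * (p:ℚ_[p])^(M-1) := by
            intro i r
            rw [hc]
            simp only []
            have hzp : ((p:ℚ_[p]))^((e:ℕ):ℤ) * (p:ℚ_[p])^(-N) = (p:ℚ_[p])^(M-1) := by
              rw [← zpow_add₀ hpne]
              congr 1
              push_cast
              omega
            push_cast
            calc ((i:ℚ_[p]) + (p:ℚ_[p])^(e:ℕ) * r) * (p:ℚ_[p])^(-N)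
                = (i:ℚ_[p]) * (p:ℚ_[p])^(-N)
                  + (r:ℚ_[p]) * ((p:ℚ_[p])^((e:ℕ):ℤ) * (p:ℚ_[p])^(-N)) := by
                  rw [zpow_natCast]
                  ring
              _ = (i:ℚ_[p]) * (p:ℚ_[p])^(-N) + (r:ℚ_[p]) * (p:ℚ_[p])^(M-1) := by rw [hzp]
          rw [Finset.sum_eq_single_of_mem b hbmem]
          · -- the inner sum at i = b
            have hinner : ∀ r ∈ Finset.range p,
                ζ (c (b + p^e * r)) *
                  (if ‖x - c (b + p^e * r)‖ ≤ (p:ℝ)^(1-M) then (1:ℂ) else 0)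
                = ζ (c b + (r:ℚ_[p]) * (p:ℚ_[p])^(M-1)) := by
              intro r _
              rw [hcsplit b r]
              rw [if_pos, mul_one]
              have e6 : x - (c b + (r:ℚ_[p]) * (p:ℚ_[p])^(M-1))
                  = (x - c b) + (-((r:ℚ_[p]) * (p:ℚ_[p])^(M-1))) := by ring
              rw [e6]
              exact ultra_le hxcb (by rw [norm_neg]; exact hshiftnorm r)
            rw [Finset.sum_congr rfl hinner]
            exact sum_shift hconst (x := x) (y := c b) hxcb
          · -- other i give zero
            intro i hi hne
            have hz : ∀ r ∈ Finset.range p,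
                ζ (c (i + p^e * r)) *
                  (if ‖x - c (i + p^e * r)‖ ≤ (p:ℝ)^(1-M) then (1:ℂ) else 0) = 0 := by
              intro r _
              rw [if_neg, mul_zero]
              intro h
              apply hne
              have hdiff : ‖c (i + p^e * r) - c b‖ ≤ (p:ℝ)^(1-M) := by
                have e5 : c (i + p^e * r) - c b = (-(x - c (i + p^e * r))) + (x - c b) := by ring
                rw [e5]
                exact ultra_le (by rwa [norm_neg]) hxcb
              have hdvd : ((p:ℤ)^e) ∣ (((i + p^e * r : ℕ):ℤ) - b) :=
                (hdvd_iff (i + p^e * r) b e (1-M) (by push_cast; omega)).mp hdiff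
              have hdvd2 : ((p:ℤ)^e) ∣ ((i:ℤ) - b) := by
                have h7 : ((i:ℤ) - b) = (((i + p^e * r : ℕ):ℤ) - b) - (p:ℤ)^e * r := by
                  push_cast; ring
                rw [h7]
                exact dvd_sub hdvd ⟨r, rfl⟩
              exact nat_eq_of_dvd (Finset.mem_range.1 hi) (Finset.mem_range.1 hbmem) (by
                have : ((p^e : ℕ) : ℤ) = (p:ℤ)^e := by push_cast; ring
                rw [this]
                exact hdvd2)
            rw [Finset.sum_congr rfl hz, Finset.sum_const, smul_zero]
        -- put the pieces together
        have hsplit : ∀ m ∈ Finset.range (p^(e+1)),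
            (p:ℂ)⁻¹ * ζ (c m) *
              ((p:ℂ) * (if ‖x - c m‖ ≤ (p:ℝ)^(-M) then (1:ℂ) else 0)
                - (if ‖x - c m‖ ≤ (p:ℝ)^(1-M) then (1:ℂ) else 0))
            = ζ (c m) * (if ‖x - c m‖ ≤ (p:ℝ)^(-M) then (1:ℂ) else 0)
              - (p:ℂ)⁻¹ * (ζ (c m) * (if ‖x - c m‖ ≤ (p:ℝ)^(1-M) then (1:ℂ) else 0)) := by
          intro m _
          split_ifs <;> field_simp <;> ring
        rw [Finset.sum_congr rfl hsplit, Finset.sum_sub_distrib, hA, ← Finset.mul_sum, hB]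
        show ζ x = η x + (ζ x - (p:ℂ)⁻¹ * ∑ r ∈ Finset.range p, ζ (x + (r:ℚ_[p]) * (p:ℚ_[p])^(M-1)))
        rw [hη]
        ring
      · -- x outside the big ball
        have hxgt := lt_of_not_ge hx
        rw [hsupp x hxgt, hηsupp x hxgt]
        have hz : ∀ m ∈ Finset.range (p^(e+1)),
            (p:ℂ)⁻¹ * ζ (c m) *
              ((p:ℂ) * (if ‖x - c m‖ ≤ (p:ℝ)^(-M) then (1:ℂ) else 0)
                - (if ‖x - c m‖ ≤ (p:ℝ)^(1-M) then (1:ℂ) else 0)) = 0 := by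
          intro m _
          have hpar : ¬ (‖x - c m‖ ≤ (p:ℝ)^(1-M)) := by
            intro h
            apply not_le.2 hxgt
            have e5 : x = (x - c m) + c m := by ring
            rw [e5]
            exact ultra_le (le_trans h (zpow_le_zpow_p (by omega))) (hcnorm m)
          have hchi : ¬ (‖x - c m‖ ≤ (p:ℝ)^(-M)) := fun h =>
            hpar (le_trans h (zpow_le_zpow_p (by omega)))
          rw [if_neg hpar, if_neg hchi]
          ring
        rw [Finset.sum_congr rfl hz, Finset.sum_const, smul_zero]
        ring

    rw [hdecomp]
    exact Submodule.add_mem _ hηspan (Submodule.sum_mem _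
      (fun m _ => Submodule.smul_mem _ _ (combo_mem (c m) M)))

theorem single_prime (μ : Measure ℚ_[p]) [μ.IsAddHaarMeasure] (ζ : ℚ_[p] → ℂ)
    (hlc : IsLocallyConstant ζ) (hcs : HasCompactSupport ζ)
    (hint : (∫ x, ζ x ∂μ) = 0) : ζ ∈ Submodule.span ℂ (Wset p) := by
  -- support bound
  obtain ⟨N, hN⟩ : ∃ N : ℕ, ∀ x : ℚ_[p], (p:ℝ)^((N:ℕ):ℤ) < ‖x‖ → ζ x = 0 := by
    obtain ⟨R, hR⟩ := hcs.isBounded.subset_closedBall 0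
    obtain ⟨N, hNR⟩ := pow_unbounded_of_one_lt R (one_lt_pR (p := p))
    refine ⟨N, fun x hx => ?_⟩
    apply image_eq_zero_of_notMem_tsupport
    intro hmem
    have h1 := hR hmem
    rw [Metric.mem_closedBall, dist_zero_right] at h1
    have h2 : (p:ℝ)^((N:ℕ):ℤ) = (p:ℝ)^(N:ℕ) := zpow_natCast _ _
    rw [h2] at hx
    linarith
  -- uniform constancy radius
  have hloc : ∀ x : ℚ_[p], ∃ n : ℕ, ∀ y : ℚ_[p], ‖y - x‖ < (p:ℝ)^(-(n:ℤ)) → ζ y = ζ x := by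
    intro x
    have hopen : IsOpen (ζ ⁻¹' {ζ x}) := hlc {ζ x}
    rw [Metric.isOpen_iff] at hopen
    obtain ⟨ε, hε, hball⟩ := hopen x rfl
    obtain ⟨n, hn⟩ := pow_unbounded_of_one_lt (1/ε) (one_lt_pR (p := p))
    refine ⟨n, fun y hy => ?_⟩
    have h3 : (p:ℝ)^(-(n:ℤ)) < ε := by
      rw [zpow_neg, zpow_natCast]
      rw [div_lt_iff₀ hε] at hn
      rw [inv_lt_iff_one_lt_mul₀ (pow_pos pR_pos n)]
      nlinarith [hn]
    have : y ∈ Metric.ball x ε := by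
      rw [Metric.mem_ball, dist_eq_norm]
      exact lt_trans hy h3
    exact hball this
  choose n hn using hloc
  set K := {x : ℚ_[p] | ‖x‖ ≤ (p:ℝ)^((N:ℕ):ℤ)} with hK
  obtain ⟨T, hT⟩ := (ball_isCompact ((N:ℕ):ℤ)).elim_finite_subcover
    (fun x : ℚ_[p] => Metric.ball x ((p:ℝ)^(-(n x:ℤ)))) (fun x => Metric.isOpen_ball)
    (by
      intro x hx
      rw [Set.mem_iUnion]
      exact ⟨x, Metric.mem_ball_self (zpow_pos pR_pos _)⟩)
  set M : ℕ := T.sup n + 1 with hM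
  have hMle : ∀ i ∈ T, n i + 1 ≤ M := fun i hi => by
    rw [hM]; exact Nat.add_le_add_right (Finset.le_sup hi) 1
  have hconst : ∀ x y : ℚ_[p], ‖x - y‖ ≤ (p:ℝ)^(-(M:ℤ)) → ζ x = ζ y := by
    intro x y hxy
    by_cases hx : ‖x‖ ≤ (p:ℝ)^((N:ℕ):ℤ)
    · obtain ⟨i, hiT, hxi⟩ : ∃ i ∈ T, x ∈ Metric.ball i ((p:ℝ)^(-(n i:ℤ))) := by
        have := hT hx
        rw [Set.mem_iUnion] at this
        obtain ⟨i, hi⟩ := this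
        rw [Set.mem_iUnion] at hi
        obtain ⟨hiT, hmem⟩ := hi
        exact ⟨i, hiT, hmem⟩
      rw [Metric.mem_ball, dist_eq_norm] at hxi
      have hxval : ζ x = ζ i := hn i x hxi
      have hyval : ζ y = ζ i := by
        apply hn i y
        have e5 : y - i = (-(x - y)) + (x - i) := by ring
        rw [e5]
        apply lt_of_le_of_lt (ultra _ _)
        apply max_lt
        · rw [norm_neg]
          apply lt_of_le_of_lt hxy
          apply lt_of_le_of_lt (zpow_le_zpow_p (show -(M:ℤ) ≤ -((n i:ℤ)+1) by
            have := hMle i hiT; push_cast; omega))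
          apply zpow_lt_zpow_right₀ one_lt_pR
          omega
        · exact hxi
      rw [hxval, hyval]
    · have hxgt := lt_of_not_ge hx
      have hy : ‖y‖ = ‖x‖ := by
        have e5 : y = x + (-(x - y)) := by ring
        rw [e5, norm_add_eq_of_lt]
        rw [norm_neg]
        apply lt_of_le_of_lt hxy
        apply lt_of_le_of_lt (zpow_le_zpow_p (show -(M:ℤ) ≤ 0 by omega))
        rw [zpow_zero]
        apply lt_of_le_of_lt _ hxgt
        have : (1:ℝ) = (p:ℝ)^(0:ℤ) := (zpow_zero _).symm
        rw [this]
        exact zpow_le_zpow_p (by positivity)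
      rw [hN x hxgt, hN y (by rw [hy]; exact hxgt)]
  exact key_induction μ (M + N) (N:ℤ) (M:ℤ) (by push_cast; ring) ζ hN hconst hint

end Single

section Adelic

/-- the generator data type at one prime -/
abbrev GenData (q : Nat.Primes) : Type :=
  {k : ℕ // 1 ≤ k ∧ k ≤ (q : ℕ) - 1} × ℤ × (Ip (q:ℕ))

/-- the base factor: either the indicator of ℤ_q or a Kozyrev wavelet -/
def baseF (c : ∀ q : Nat.Primes, Option (GenData q)) (q : Nat.Primes) :
    ℚ_[(q:ℕ)] → ℂ :=
  fun z => (c q).elim (indZ q z) (fun t => kozyrev q t.1 t.2.1 t.2.2 z)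

/-- a product function with overrides `g` on `S` and base factors elsewhere -/
def mixedProd (S : Finset Nat.Primes) (g : ∀ q : Nat.Primes, ℚ_[(q:ℕ)] → ℂ)
    (c : ∀ q : Nat.Primes, Option (GenData q)) : FiniteAdele → ℂ :=
  fun x => ∏' q : Nat.Primes, (if q ∈ S then g q (x.1 q) else baseF c q (x.1 q))

lemma badset_finite (x : FiniteAdele) : {q : Nat.Primes | ¬ ‖x.1 q‖ ≤ 1}.Finite :=
  Filter.eventually_cofinite.mp x.2

lemma mixedProd_eq_prod (S : Finset Nat.Primes) (g) (c)
    (x : FiniteAdele) (T : Finset Nat.Primes) (hS : S ⊆ T)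
    (hc : ∀ q : Nat.Primes, c q ≠ none → q ∈ T)
    (hx : ∀ q : Nat.Primes, ¬ ‖x.1 q‖ ≤ 1 → q ∈ T) :
    mixedProd S g c x = ∏ q ∈ T, (if q ∈ S then g q (x.1 q) else baseF c q (x.1 q)) := by
  apply tprod_eq_prod
  intro q hq
  rw [if_neg (fun h => hq (hS h))]
  have hcq : c q = none := by
    by_contra h
    exact hq (hc q h)
  have hxq : ‖x.1 q‖ ≤ 1 := by
    by_contra h
    exact hq (hx q h)
  rw [baseF, hcq]
  show indZ q (x.1 q) = 1
  rw [indZ, if_pos hxq]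

/-- the canonical finite support set -/
noncomputable def Tx (S : Finset Nat.Primes)
    (c : ∀ q : Nat.Primes, Option (GenData q)) (hc : {q : Nat.Primes | c q ≠ none}.Finite)
    (x : FiniteAdele) : Finset Nat.Primes :=
  S ∪ hc.toFinset ∪ (badset_finite x).toFinset

lemma mixedProd_eq_prod_Tx (S : Finset Nat.Primes) (g) (c)
    (hc : {q : Nat.Primes | c q ≠ none}.Finite) (x : FiniteAdele) :
    mixedProd S g c x
      = ∏ q ∈ Tx S c hc x, (if q ∈ S then g q (x.1 q) else baseF c q (x.1 q)) := by
  apply mixedProd_eq_prod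
  · intro q hq
    exact Finset.mem_union_left _ (Finset.mem_union_left _ hq)
  · intro q hq
    exact Finset.mem_union_left _ (Finset.mem_union_right _ (hc.mem_toFinset.2 hq))
  · intro q hq
    exact Finset.mem_union_right _ ((badset_finite x).mem_toFinset.2 hq)

lemma mixedProd_update_factor (S₀ : Finset Nat.Primes) (q₀ : Nat.Primes) (hq₀ : q₀ ∉ S₀)
    (g) (c) (hc : {q : Nat.Primes | c q ≠ none}.Finite) (h : ℚ_[(q₀:ℕ)] → ℂ)
    (x : FiniteAdele) :
    mixedProd (insert q₀ S₀) (Function.update g q₀ h) c x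
      = h (x.1 q₀) * ∏ q ∈ (Tx (insert q₀ S₀) c hc x).erase q₀,
          (if q ∈ insert q₀ S₀ then (Function.update g q₀ h) q (x.1 q) else baseF c q (x.1 q)) := by
  rw [mixedProd_eq_prod_Tx (insert q₀ S₀) (Function.update g q₀ h) c hc x]
  have hq₀mem : q₀ ∈ Tx (insert q₀ S₀) c hc x :=
    Finset.mem_union_left _ (Finset.mem_union_left _ (Finset.mem_insert_self _ _))
  rw [← Finset.mul_prod_erase _ _ hq₀mem]
  congr 1
  rw [if_pos (Finset.mem_insert_self _ _), Function.update_self]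

lemma assemble : ∀ S : Finset Nat.Primes,
    ∀ (g : ∀ q : Nat.Primes, ℚ_[(q:ℕ)] → ℂ) (c : ∀ q : Nat.Primes, Option (GenData q)),
    {q : Nat.Primes | c q ≠ none}.Finite →
    (∀ q ∈ S, g q ∈ Submodule.span ℂ (Wset (q:ℕ))) →
    mixedProd S g c ∈ Submodule.span ℂ waveletSet := by
  intro S
  induction S using Finset.induction with
  | empty =>
    intro g c hc hg
    apply Submodule.subset_span
    refine ⟨c, hc, ?_⟩
    funext x
    exact tprod_congr (fun q => by rw [if_neg (Finset.notMem_empty q)]; rfl)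
  | @insert q₀ S₀ hq₀ ih =>
    intro g c hc hg
    have hgq₀ : g q₀ ∈ Submodule.span ℂ (Wset (q₀:ℕ)) := hg q₀ (Finset.mem_insert_self _ _)
    have main : ∀ h : ℚ_[(q₀:ℕ)] → ℂ, h ∈ Submodule.span ℂ (Wset (q₀:ℕ)) →
        mixedProd (insert q₀ S₀) (Function.update g q₀ h) c ∈ Submodule.span ℂ waveletSet := by
      intro h hh
      induction hh using Submodule.span_induction with
      | mem f hf =>
        obtain ⟨k, j, a, hk, ha, rfl⟩ := hf
        have heq : mixedProd (insert q₀ S₀) (Function.update g q₀ (kozyrev (q₀:ℕ) k j a)) c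
            = mixedProd S₀ g (Function.update c q₀ (some (⟨k, hk⟩, j, ⟨a, ha⟩))) := by
          funext x
          apply tprod_congr
          intro q
          by_cases hqq : q = q₀
          · subst hqq
            rw [if_pos (Finset.mem_insert_self _ _), if_neg hq₀, Function.update_self]
            rw [baseF, Function.update_self]
            rfl
          · rw [Function.update_of_ne hqq]
            by_cases hqS : q ∈ S₀
            · rw [if_pos (Finset.mem_insert_of_mem hqS), if_pos hqS]
            · rw [if_neg (fun hmem => by
                rcases Finset.mem_insert.1 hmem with h1 | h1
                · exact hqq h1
                · exact hqS h1), if_neg hqS]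
              rw [baseF, baseF, Function.update_of_ne hqq]
        rw [heq]
        apply ih
        · apply Set.Finite.subset (hc.insert q₀)
          intro q hq
          by_cases hqq : q = q₀
          · exact Or.inl hqq
          · right
            rwa [Set.mem_setOf_eq, Function.update_of_ne hqq] at hq
        · intro q hq
          exact hg q (Finset.mem_insert_of_mem hq)
      | zero =>
        have heq : mixedProd (insert q₀ S₀) (Function.update g q₀ 0) c
            = (0 : FiniteAdele → ℂ) := by
          funext x
          rw [mixedProd_update_factor S₀ q₀ hq₀ g c hc 0 x]
          show (0:ℂ) * _ = 0
          rw [zero_mul]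
        rw [heq]
        exact Submodule.zero_mem _
      | add f₁ f₂ h₁ h₂ ih₁ ih₂ =>
        have heq : mixedProd (insert q₀ S₀) (Function.update g q₀ (f₁ + f₂)) c
            = mixedProd (insert q₀ S₀) (Function.update g q₀ f₁) c
              + mixedProd (insert q₀ S₀) (Function.update g q₀ f₂) c := by
          funext x
          rw [Pi.add_apply, mixedProd_update_factor S₀ q₀ hq₀ g c hc (f₁ + f₂) x,
            mixedProd_update_factor S₀ q₀ hq₀ g c hc f₁ x,
            mixedProd_update_factor S₀ q₀ hq₀ g c hc f₂ x]
          have hrest : ∀ f : ℚ_[(q₀:ℕ)] → ℂ,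
              ∏ q ∈ (Tx (insert q₀ S₀) c hc x).erase q₀,
                (if q ∈ insert q₀ S₀ then (Function.update g q₀ f) q (x.1 q)
                  else baseF c q (x.1 q))
              = ∏ q ∈ (Tx (insert q₀ S₀) c hc x).erase q₀,
                (if q ∈ insert q₀ S₀ then (Function.update g q₀ f₁) q (x.1 q)
                  else baseF c q (x.1 q)) := by
            intro f
            apply Finset.prod_congr rfl
            intro q hq
            have hqq : q ≠ q₀ := Finset.ne_of_mem_erase hq
            rw [Function.update_of_ne hqq, Function.update_of_ne hqq]
          rw [hrest (f₁ + f₂), hrest f₂]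
          show (f₁ (x.1 q₀) + f₂ (x.1 q₀)) * _ = _
          ring
        rw [heq]
        exact Submodule.add_mem _ ih₁ ih₂
      | smul a f hf ihf =>
        have heq : mixedProd (insert q₀ S₀) (Function.update g q₀ (a • f)) c
            = a • mixedProd (insert q₀ S₀) (Function.update g q₀ f) c := by
          funext x
          rw [Pi.smul_apply, mixedProd_update_factor S₀ q₀ hq₀ g c hc (a • f) x,
            mixedProd_update_factor S₀ q₀ hq₀ g c hc f x]
          have hrest :
              ∏ q ∈ (Tx (insert q₀ S₀) c hc x).erase q₀,
                (if q ∈ insert q₀ S₀ then (Function.update g q₀ (a • f)) q (x.1 q)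
                  else baseF c q (x.1 q))
              = ∏ q ∈ (Tx (insert q₀ S₀) c hc x).erase q₀,
                (if q ∈ insert q₀ S₀ then (Function.update g q₀ f) q (x.1 q)
                  else baseF c q (x.1 q)) := by
            apply Finset.prod_congr rfl
            intro q hq
            have hqq : q ≠ q₀ := Finset.ne_of_mem_erase hq
            rw [Function.update_of_ne hqq, Function.update_of_ne hqq]
          rw [hrest]
          show (a • f (x.1 q₀)) * _ = a • (f (x.1 q₀) * _)
          rw [smul_eq_mul, smul_eq_mul]
          ring
        rw [heq]
        exact Submodule.smul_mem _ _ ihf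
    have hfinal := main (g q₀) hgq₀
    rwa [Function.update_eq_self] at hfinal

end Adelic

/-- Every elementary Lizorkin test function on `Ã` — and hence every
finite linear combination of such — is a finite `ℂ`-linear combination of the adelic
wavelet functions.  Here `μ_p` is the Haar measure on `ℚ_p` with `μ_p(ℤ_p) = 1`. -/
theorem lizorkin_subset_span_wavelets
    (μp : ∀ q : Nat.Primes, MeasureTheory.Measure ℚ_[(q : ℕ)])
    (hHaar : ∀ q, (μp q).IsAddHaarMeasure)
    (hnorm : ∀ q, μp q {x : ℚ_[(q : ℕ)] | ‖x‖ ≤ 1} = 1) :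
    Submodule.span ℂ (elementaryLizorkinSet μp) ≤ Submodule.span ℂ waveletSet := by
  rw [Submodule.span_le]
  rintro f ⟨ζ, hlc, hcs, ⟨P, hgt, hint⟩, rfl⟩
  have hSfin : {q : Nat.Primes | (q:ℕ) ≤ (P:ℕ)}.Finite := by
    have : {q : Nat.Primes | (q:ℕ) ≤ (P:ℕ)}
        = (fun q : Nat.Primes => (q:ℕ)) ⁻¹' (Set.Iic (P:ℕ)) := rfl
    rw [this]
    exact Set.Finite.preimage (Set.injOn_of_injective (fun a b => Subtype.ext))
      (Set.finite_Iic _)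
  have heq : (fun x : FiniteAdele => ∏' q : Nat.Primes, ζ q (x.1 q))
      = mixedProd hSfin.toFinset ζ (fun _ => none) := by
    funext x
    apply tprod_congr
    intro q
    by_cases hq : q ∈ hSfin.toFinset
    · rw [if_pos hq]
    · rw [if_neg hq]
      have hPq : (P:ℕ) < (q:ℕ) := by
        by_contra hle
        exact hq (hSfin.mem_toFinset.2 (le_of_not_gt hle))
      rw [hgt q hPq]
      rfl
  rw [heq]
  apply assemble
  · exact Set.finite_empty.subset (by intro q hq; exact hq rfl)
  · intro q hq
    haveI := hHaar q
    exact single_prime (μp q) (ζ q) (hlc q) (hcs q)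
      (hint q (hSfin.mem_toFinset.1 hq))
end
end

section
/- For j ∈ ℤ let Ṽ_j be the closed linear span in L²(ℚ_p, μ_p) of the functions x ↦ p^{j/2} · 1_{ℤ_p}(p^{−j}x − a) · 1_{ℤ_p}(x), over a ∈ I_p (the restrictions to ℤ_p of the scale-j shifted scaling functions). Then Ṽ_j ⊆ Ṽ_{j+1} for every j ∈ ℤ, and Ṽ_j equals the one-dimensional subspace spanned by 1_{ℤ_p} for every j ≤ 0. -/
open MeasureTheory Complex
open scoped Classical

noncomputable section

variable (p : ℕ) [Fact p.Prime]

-- Auxiliary lemmas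


lemma indZ_div_p (y : ℚ_[p]) {k : ℕ} :
    indZ p ((y - (k : ℚ_[p])) / (p : ℚ_[p])) = if ‖y - (k : ℚ_[p])‖ ≤ (p : ℝ)⁻¹ then 1 else 0 := by
  have hp : p.Prime := Fact.out
  have h0 : (0:ℝ) < ‖(p:ℚ_[p])‖ := by
    rw [norm_pos_iff]
    exact_mod_cast hp.ne_zero
  have hiff : ‖y - (k : ℚ_[p])‖ / ‖(p : ℚ_[p])‖ ≤ 1 ↔ ‖y - (k : ℚ_[p])‖ ≤ (p : ℝ)⁻¹ := by
    rw [div_le_one h0, Padic.norm_p]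
  unfold indZ
  rw [norm_div]
  simp only [hiff]

lemma norm_natCast_le_one (k : ℕ) : ‖((k : ℕ) : ℚ_[p])‖ ≤ 1 := by
  have := Padic.norm_int_le_one (p := p) (k : ℤ)
  simpa using this

lemma sum_indZ (y : ℚ_[p]) :
    ∑ k ∈ Finset.range p, indZ p ((y - (k : ℚ_[p])) / (p : ℚ_[p])) = indZ p y := by
  have hp : p.Prime := Fact.out
  have hpinv_lt : (p : ℝ)⁻¹ < 1 := inv_lt_one_of_one_lt₀ (by exact_mod_cast hp.one_lt)
  by_cases hy : ‖y‖ ≤ 1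
  · -- y ∈ ℤ_p
    have hz : ∃ z : ℤ_[p], (z : ℚ_[p]) = y := ⟨⟨y, hy⟩, rfl⟩
    obtain ⟨z, hzy⟩ := hz
    obtain ⟨k₀, hk₀lt, hmem⟩ : ∃ n : ℕ, n < p ∧ z - (n : ℤ_[p]) ∈ IsLocalRing.maximalIdeal ℤ_[p] :=
      ⟨PadicInt.zmodRepr z, PadicInt.zmodRepr_lt_p z, (PadicInt.zmodRepr_spec z).2⟩
    have hnear : ‖y - (k₀ : ℚ_[p])‖ < 1 := by
      have h1 := hmem
      rw [IsLocalRing.mem_maximalIdeal, mem_nonunits_iff] at h1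
      have h2 : ‖z - (k₀ : ℤ_[p])‖ < 1 :=
        lt_of_le_of_ne (PadicInt.norm_le_one _) (fun h => h1 (PadicInt.isUnit_iff.2 h))
      have : ((z - (k₀ : ℤ_[p]) : ℤ_[p]) : ℚ_[p]) = y - (k₀ : ℚ_[p]) := by push_cast [hzy]; ring
      rwa [PadicInt.norm_def, this] at h2
    have hnear' : ‖y - (k₀ : ℚ_[p])‖ ≤ (p : ℝ)⁻¹ := by
      have := (Padic.norm_le_pow_iff_norm_lt_pow_add_one (y - (k₀ : ℚ_[p])) (-1)).2
      simpa using this (by simpa using hnear)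
    rw [Finset.sum_eq_single_of_mem k₀ (Finset.mem_range.2 hk₀lt)]
    · rw [indZ_div_p, if_pos hnear', indZ, if_pos hy]
    · intro k hk hne
      rw [indZ_div_p, if_neg]
      intro hcon
      have hd : ‖(((k₀ : ℤ) - (k : ℤ) : ℤ) : ℚ_[p])‖ < 1 := by
        have : (((k₀ : ℤ) - (k : ℤ) : ℤ) : ℚ_[p]) = (y - (k : ℚ_[p])) - (y - (k₀ : ℚ_[p])) := by
          push_cast; ring
        rw [this]
        calc ‖(y - (k : ℚ_[p])) - (y - (k₀ : ℚ_[p]))‖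
            ≤ max ‖y - (k : ℚ_[p])‖ ‖-(y - (k₀ : ℚ_[p]))‖ := by
              rw [sub_eq_add_neg]; exact Padic.nonarchimedean _ _
          _ < 1 := by
              rw [norm_neg]
              exact max_lt (lt_of_le_of_lt hcon hpinv_lt) hnear
      rw [Padic.norm_intCast_lt_one_iff] at hd
      have habs : |(k₀ : ℤ) - (k : ℤ)| < (p : ℤ) := by
        have h1 : (k₀ : ℤ) < p := by exact_mod_cast hk₀lt
        have h2 : (k : ℤ) < p := by exact_mod_cast Finset.mem_range.1 hk
        rw [abs_lt]
        constructor <;> omega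
      have hzero : (k₀ : ℤ) - (k : ℤ) = 0 := Int.eq_zero_of_abs_lt_dvd hd habs
      have : k₀ = k := by omega
      exact hne this.symm
  · -- y ∉ ℤ_p
    rw [indZ, if_neg hy, Finset.sum_eq_zero]
    intro k hk
    rw [indZ_div_p, if_neg]
    intro hcon
    apply hy
    calc ‖y‖ = ‖(y - (k : ℚ_[p])) + (k : ℚ_[p])‖ := by ring_nf
      _ ≤ max ‖y - (k : ℚ_[p])‖ ‖((k : ℕ) : ℚ_[p])‖ := Padic.nonarchimedean _ _
      _ ≤ 1 := max_le (le_of_lt (lt_of_le_of_lt hcon hpinv_lt)) (norm_natCast_le_one p k)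

/-- The generator function at scale `j`, shift `a`. -/
def fja (j : ℤ) (a : ℚ_[p]) (x : ℚ_[p]) : ℂ :=
  (((p : ℝ) ^ ((j : ℝ) / 2) : ℝ) : ℂ) * indZ p ((p : ℚ_[p]) ^ (-j) * x - a) * indZ p x

lemma fja_eq_indicator (j : ℤ) (a : ℚ_[p]) :
    fja p j a = Set.indicator {x : ℚ_[p] | ‖(p : ℚ_[p]) ^ (-j) * x - a‖ ≤ 1 ∧ ‖x‖ ≤ 1}
      (fun _ => (((p : ℝ) ^ ((j : ℝ) / 2) : ℝ) : ℂ)) := by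
  funext x
  by_cases h1 : ‖(p : ℚ_[p]) ^ (-j) * x - a‖ ≤ 1 <;> by_cases h2 : ‖x‖ ≤ 1 <;>
    simp [fja, indZ, Set.indicator, h1, h2]

lemma measurableSet_cond (j : ℤ) (a : ℚ_[p]) :
    MeasurableSet {x : ℚ_[p] | ‖(p : ℚ_[p]) ^ (-j) * x - a‖ ≤ 1 ∧ ‖x‖ ≤ 1} := by
  have h1 : IsClosed {x : ℚ_[p] | ‖(p : ℚ_[p]) ^ (-j) * x - a‖ ≤ 1} :=
    isClosed_le (((continuous_const.mul continuous_id).sub continuous_const).norm)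
      continuous_const
  have h2 : IsClosed {x : ℚ_[p] | ‖x‖ ≤ 1} := isClosed_le continuous_norm continuous_const
  exact (h1.inter h2).measurableSet

lemma memLp_fja (μ : MeasureTheory.Measure ℚ_[p]) (hμ : μ {x : ℚ_[p] | ‖x‖ ≤ 1} ≠ ⊤)
    (j : ℤ) (a : ℚ_[p]) : MemLp (fja p j a) 2 μ := by
  rw [fja_eq_indicator]
  refine memLp_indicator_const 2 (measurableSet_cond p j a) _ (Or.inr ?_)
  exact ne_top_of_le_ne_top hμ (measure_mono fun x hx => hx.2)

lemma indZ_eq_indicator :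
    indZ p = Set.indicator {x : ℚ_[p] | ‖x‖ ≤ 1} (fun _ => (1 : ℂ)) := by
  funext x
  by_cases h : ‖x‖ ≤ 1 <;> simp [indZ, Set.indicator, h]

lemma memLp_indZ (μ : MeasureTheory.Measure ℚ_[p]) (hμ : μ {x : ℚ_[p] | ‖x‖ ≤ 1} ≠ ⊤) :
    MemLp (indZ p) 2 μ := by
  rw [indZ_eq_indicator]
  exact memLp_indicator_const 2 ((isClosed_le continuous_norm continuous_const).measurableSet)
    _ (Or.inr hμ)

lemma Lp_coeFn_sum {α : Type*} [MeasurableSpace α] {μ : MeasureTheory.Measure α}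
    {ι : Type*} (s : Finset ι) (F : ι → Lp ℂ 2 μ) :
    ⇑(∑ i ∈ s, F i) =ᵐ[μ] fun x => ∑ i ∈ s, F i x := by
  classical
  induction s using Finset.cons_induction with
  | empty => simp only [Finset.sum_empty]; exact Lp.coeFn_zero (E := ℂ) (p := 2) (μ := μ)
  | cons i s his ih =>
    rw [Finset.sum_cons]
    filter_upwards [Lp.coeFn_add (F i) (∑ j ∈ s, F j), ih] with x h1 h2
    simp only [h1, Pi.add_apply, h2, Finset.sum_cons]

/-- the refinement identity. -/
lemma fja_refine (j : ℤ) (a : ℚ_[p]) (x : ℚ_[p]) :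
    fja p j a x = ∑ k ∈ Finset.range p,
      (((p : ℝ) ^ (-(1 / 2 : ℝ)) : ℝ) : ℂ) * fja p (j + 1) ((a + (k : ℚ_[p])) / (p : ℚ_[p])) x := by
  have hp : p.Prime := Fact.out
  have hpR : (0 : ℝ) < p := by exact_mod_cast hp.pos
  have hpQ : (p : ℚ_[p]) ≠ 0 := by exact_mod_cast hp.ne_zero
  have hc : (((p : ℝ) ^ ((j : ℝ) / 2) : ℝ) : ℂ)
      = (((p : ℝ) ^ (-(1 / 2 : ℝ)) : ℝ) : ℂ) * (((p : ℝ) ^ (((j + 1 : ℤ) : ℝ) / 2) : ℝ) : ℂ) := by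
    rw [← Complex.ofReal_mul, ← Real.rpow_add hpR]
    push_cast
    ring_nf
  have harg : ∀ k : ℕ, (p : ℚ_[p]) ^ (-(j + 1)) * x - (a + (k : ℚ_[p])) / (p : ℚ_[p])
      = (((p : ℚ_[p]) ^ (-j) * x - a) - (k : ℚ_[p])) / (p : ℚ_[p]) := by
    intro k
    have : (p : ℚ_[p]) ^ (-(j + 1)) = (p : ℚ_[p]) ^ (-j) / (p : ℚ_[p]) := by
      rw [eq_div_iff hpQ, ← zpow_add_one₀ hpQ]
      ring_nf
    rw [this, div_mul_eq_mul_div, div_sub_div_same]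
    ring_nf
  calc fja p j a x
      = (((p : ℝ) ^ ((j : ℝ) / 2) : ℝ) : ℂ) *
          (∑ k ∈ Finset.range p,
            indZ p ((((p : ℚ_[p]) ^ (-j) * x - a) - (k : ℚ_[p])) / (p : ℚ_[p]))) * indZ p x := by
        rw [sum_indZ]; rfl
    _ = ∑ k ∈ Finset.range p,
          (((p : ℝ) ^ (-(1 / 2 : ℝ)) : ℝ) : ℂ) * fja p (j + 1) ((a + (k : ℚ_[p])) / (p : ℚ_[p])) x := by
        rw [Finset.mul_sum, Finset.sum_mul]
        refine Finset.sum_congr rfl fun k _ => ?_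
        rw [fja, harg k, hc]
        ring

lemma norm_zpow_le_one (j : ℤ) (hj : j ≤ 0) : ‖(p : ℚ_[p]) ^ (-j)‖ ≤ 1 := by
  have hp : p.Prime := Fact.out
  have hpR : (1 : ℝ) ≤ p := by exact_mod_cast hp.one_le
  rw [norm_zpow, Padic.norm_p, inv_zpow, ← zpow_neg, neg_neg]
  calc (p : ℝ) ^ j ≤ (p : ℝ) ^ (0 : ℤ) := zpow_le_zpow_right₀ hpR hj
    _ = 1 := zpow_zero _

lemma fja_of_nonpos_le (j : ℤ) (hj : j ≤ 0) (a : ℚ_[p]) (ha : ‖a‖ ≤ 1) :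
    fja p j a = fun x => (((p : ℝ) ^ ((j : ℝ) / 2) : ℝ) : ℂ) * indZ p x := by
  funext x
  by_cases hx : ‖x‖ ≤ 1
  · have h1 : ‖(p : ℚ_[p]) ^ (-j) * x‖ ≤ 1 := by
      rw [norm_mul]
      exact mul_le_one₀ (norm_zpow_le_one p j hj) (norm_nonneg _) hx
    have h2 : ‖(p : ℚ_[p]) ^ (-j) * x - a‖ ≤ 1 := by
      calc ‖(p : ℚ_[p]) ^ (-j) * x - a‖ ≤ max ‖(p : ℚ_[p]) ^ (-j) * x‖ ‖-a‖ := by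
            rw [sub_eq_add_neg]; exact Padic.nonarchimedean _ _
        _ ≤ 1 := by rw [norm_neg]; exact max_le h1 ha
    unfold fja indZ
    rw [if_pos h2, if_pos hx]
    ring
  · unfold fja indZ
    rw [if_neg hx]
    ring

lemma fja_of_nonpos_gt (j : ℤ) (hj : j ≤ 0) (a : ℚ_[p]) (ha : ¬ ‖a‖ ≤ 1) :
    fja p j a = fun _ => (0 : ℂ) := by
  funext x
  by_cases hx : ‖x‖ ≤ 1
  · have h1 : ‖(p : ℚ_[p]) ^ (-j) * x‖ ≤ 1 := by
      rw [norm_mul]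
      exact mul_le_one₀ (norm_zpow_le_one p j hj) (norm_nonneg _) hx
    have h2 : ‖(p : ℚ_[p]) ^ (-j) * x - a‖ = ‖a‖ := by
      rw [sub_eq_add_neg, Padic.add_eq_max_of_ne, norm_neg]
      · exact max_eq_right (le_of_lt (lt_of_le_of_lt h1 (lt_of_not_ge ha)))
      · rw [norm_neg]
        exact ne_of_lt (lt_of_le_of_lt h1 (lt_of_not_ge ha))
    have h3 : ¬ ‖(p : ℚ_[p]) ^ (-j) * x - a‖ ≤ 1 := by rw [h2]; exact ha
    unfold fja indZ
    rw [if_neg h3]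
    ring
  · unfold fja indZ
    rw [if_neg hx]
    ring



open MeasureTheory in
/-- The space `Ṽ_j`: the closed linear span in `L²(ℚ_p, μ)` of the restrictions to `ℤ_p`
of the scale-`j` shifted scaling functions `x ↦ p^{j/2}·1_{ℤ_p}(p^{-j}x - a)·1_{ℤ_p}(x)`,
`a ∈ I_p`. -/
def Vtilde (p : ℕ) [Fact p.Prime] (μ : Measure ℚ_[p]) (j : ℤ) :
    Submodule ℂ (Lp ℂ 2 μ) :=
  (Submodule.span ℂ {g : Lp ℂ 2 μ | ∃ a ∈ Ip p,
    (g : ℚ_[p] → ℂ) =ᵐ[μ] fun x =>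
      (((p : ℝ) ^ ((j : ℝ) / 2) : ℝ) : ℂ) * indZ p ((p : ℚ_[p]) ^ (-j) * x - a) *
        indZ p x}).topologicalClosure

/-- The spaces `Ṽ_j` are increasing in `j`, and for `j ≤ 0` the space
`Ṽ_j` is the one-dimensional subspace of `L²(ℚ_p, μ)` spanned by `1_{ℤ_p}`. -/
theorem Vtilde_mono_and_eq_span_indicator (p : ℕ) [Fact p.Prime]
    (μ : MeasureTheory.Measure ℚ_[p]) [μ.IsAddHaarMeasure]
    (hμ : μ {x : ℚ_[p] | ‖x‖ ≤ 1} = 1) :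
    (∀ j : ℤ, Vtilde p μ j ≤ Vtilde p μ (j + 1)) ∧
    (∀ j : ℤ, j ≤ 0 → Vtilde p μ j
      = Submodule.span ℂ {g : MeasureTheory.Lp ℂ 2 μ |
          (g : ℚ_[p] → ℂ) =ᵐ[μ] fun x => indZ p x}) := by
  have hp : p.Prime := Fact.out
  have hpR : (0 : ℝ) < p := by exact_mod_cast hp.pos
  have hpQ : (p : ℚ_[p]) ≠ 0 := by exact_mod_cast hp.ne_zero
  have hfin : μ {x : ℚ_[p] | ‖x‖ ≤ 1} ≠ ⊤ := by rw [hμ]; exact ENNReal.one_ne_top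
  constructor
  · -- monotonicity
    intro j
    unfold Vtilde
    refine Submodule.topologicalClosure_minimal _ ?_
      (Submodule.isClosed_topologicalClosure _)
    rw [Submodule.span_le]
    rintro g ⟨a, haIp, hg⟩
    set c : ℂ := (((p : ℝ) ^ (-(1 / 2 : ℝ)) : ℝ) : ℂ) with hcdef
    set G : ℕ → Lp ℂ 2 μ := fun k =>
      (memLp_fja p μ hfin (j + 1) ((a + (k : ℚ_[p])) / (p : ℚ_[p]))).toLp _ with hGdef
    have hGg : ∀ k : ℕ, ⇑(G k) =ᵐ[μ] fja p (j + 1) ((a + (k : ℚ_[p])) / (p : ℚ_[p])) :=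
      fun k => MemLp.coeFn_toLp _
    have hsum : ⇑(∑ k ∈ Finset.range p, c • G k) =ᵐ[μ] fja p j a := by
      have h2 : ∀ᵐ x ∂μ, ∀ k ∈ (↑(Finset.range p) : Set ℕ),
          (c • G k) x = c * fja p (j + 1) ((a + (k : ℚ_[p])) / (p : ℚ_[p])) x := by
        rw [MeasureTheory.ae_ball_iff (Finset.countable_toSet _)]
        intro k _
        filter_upwards [Lp.coeFn_smul c (G k), hGg k] with x e1 e2
        rw [e1, Pi.smul_apply, e2, smul_eq_mul]
      filter_upwards [Lp_coeFn_sum (Finset.range p) (fun k => c • G k), h2] with x h1 h2x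
      rw [h1, fja_refine]
      exact Finset.sum_congr rfl fun k hk => h2x k (Finset.mem_coe.2 hk)
    have hgeq : g = ∑ k ∈ Finset.range p, c • G k := Lp.ext (hg.trans hsum.symm)
    rw [hgeq]
    refine Submodule.le_topologicalClosure _ (Submodule.sum_mem _ fun k hk =>
      Submodule.smul_mem _ _ (Submodule.subset_span ?_))
    obtain ⟨m, n, hmn, rfl⟩ := haIp
    have hkp : k < p := Finset.mem_range.1 hk
    have hsh : (((m : ℚ_[p]) / (p : ℚ_[p]) ^ n + (k : ℚ_[p])) / (p : ℚ_[p]))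
        = ((m + k * p ^ n : ℕ) : ℚ_[p]) / (p : ℚ_[p]) ^ (n + 1) := by
      have hpn : (p : ℚ_[p]) ^ n ≠ 0 := pow_ne_zero _ hpQ
      have hcast : ((m + k * p ^ n : ℕ) : ℚ_[p])
          = (m : ℚ_[p]) + (k : ℚ_[p]) * (p : ℚ_[p]) ^ n := by push_cast; ring
      rw [hcast, pow_succ, div_add' _ _ _ hpn, div_div]
    refine ⟨((m + k * p ^ n : ℕ) : ℚ_[p]) / (p : ℚ_[p]) ^ (n + 1),
      ⟨m + k * p ^ n, n + 1, ?_, rfl⟩, ?_⟩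
    · have h1 : m + k * p ^ n < (k + 1) * p ^ n := by
        rw [add_mul, one_mul]; omega
      have h2 : (k + 1) * p ^ n ≤ p * p ^ n := Nat.mul_le_mul_right _ hkp
      calc m + k * p ^ n < (k + 1) * p ^ n := h1
        _ ≤ p * p ^ n := h2
        _ = p ^ (n + 1) := by rw [pow_succ]; ring
    · have := hGg k
      rw [hsh] at this
      exact this
  · -- j ≤ 0 part
    intro j hj
    set G0 : Lp ℂ 2 μ := (memLp_indZ p μ hfin).toLp _ with hG0
    have hG0c : ⇑G0 =ᵐ[μ] indZ p := MemLp.coeFn_toLp _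
    have hset : {g : Lp ℂ 2 μ | ⇑g =ᵐ[μ] fun x => indZ p x} = {G0} := by
      ext g
      simp only [Set.mem_setOf_eq, Set.mem_singleton_iff]
      constructor
      · intro h; exact Lp.ext (h.trans hG0c.symm)
      · rintro rfl; exact hG0c
    rw [hset]
    unfold Vtilde
    set cj : ℂ := (((p : ℝ) ^ ((j : ℝ) / 2) : ℝ) : ℂ) with hcj
    have hcj0 : cj ≠ 0 := by
      rw [hcj, Complex.ofReal_ne_zero]
      exact (Real.rpow_pos_of_pos hpR _).ne'
    have hsmul : ⇑(cj • G0) =ᵐ[μ] fun x => cj * indZ p x := by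
      filter_upwards [Lp.coeFn_smul cj G0, hG0c] with x e1 e2
      rw [e1, Pi.smul_apply, e2, smul_eq_mul]
    apply le_antisymm
    · refine Submodule.topologicalClosure_minimal _ ?_
        (Submodule.closed_of_finiteDimensional _)
      rw [Submodule.span_le]
      rintro g ⟨a, haIp, hg⟩
      by_cases ha : ‖a‖ ≤ 1
      · have hfj := fja_of_nonpos_le p j hj a ha
        have hgG : g = cj • G0 := by
          apply Lp.ext
          refine hg.trans ?_
          rw [show (fun x => cj * indZ p ((p : ℚ_[p]) ^ (-j) * x - a) * indZ p x)
            = fja p j a from rfl, hfj]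
          exact hsmul.symm
        rw [hgG]
        exact Submodule.smul_mem _ _ (Submodule.subset_span rfl)
      · have hfj := fja_of_nonpos_gt p j hj a ha
        have hgG : g = 0 := by
          apply Lp.ext
          refine hg.trans ?_
          rw [show (fun x => cj * indZ p ((p : ℚ_[p]) ^ (-j) * x - a) * indZ p x)
            = fja p j a from rfl, hfj]
          exact (Lp.coeFn_zero ℂ 2 μ).symm
        rw [hgG]
        exact Submodule.zero_mem _
    · rw [Submodule.span_le]
      intro g hgmem
      rw [Set.mem_singleton_iff] at hgmem
      subst hgmem
      have h0Ip : (0 : ℚ_[p]) ∈ Ip p := ⟨0, 0, by norm_num, by simp⟩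
      have hmem : cj • G0 ∈ Submodule.span ℂ {g : Lp ℂ 2 μ | ∃ a ∈ Ip p,
          ⇑g =ᵐ[μ] fun x =>
            (((p : ℝ) ^ ((j : ℝ) / 2) : ℝ) : ℂ) * indZ p ((p : ℚ_[p]) ^ (-j) * x - a) *
              indZ p x} := by
        refine Submodule.subset_span ⟨0, h0Ip, ?_⟩
        refine hsmul.trans ?_
        rw [show (fun x => cj * indZ p ((p : ℚ_[p]) ^ (-j) * x - (0:ℚ_[p])) * indZ p x)
          = fja p j 0 from rfl, fja_of_nonpos_le p j hj 0 (by simp)]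
      have hG0eq : G0 = cj⁻¹ • (cj • G0) := by
        rw [smul_smul, inv_mul_cancel₀ hcj0, one_smul]
      rw [SetLike.mem_coe, hG0eq]
      exact Submodule.smul_mem _ _ (Submodule.le_topologicalClosure _ hmem)
end
end

section
/- Let φ : ℚ_p → ℂ be locally constant with compact support, and let l, N ∈ ℤ. Write B_M = {x ∈ ℚ_p : |x|_p ≤ p^M}. Then the following are equivalent: (i) φ vanishes outside B_N and φ(x + y) = φ(x) for all x ∈ ℚ_p and all y with |y|_p ≤ p^l; (ii) the Fourier transform 𝓕_pφ vanishes outside B_{−l} and 𝓕_pφ(ξ + η) = 𝓕_pφ(ξ) for all ξ ∈ ℚ_p and all η with |η|_p ≤ p^{−N}. -/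
open MeasureTheory Complex
open scoped Classical

noncomputable section

variable (p : ℕ) [Fact p.Prime]

/-- The `p`-adic Fourier transform `𝓕_pφ(ξ) = ∫ χ_p(ξx) φ(x) dμ(x)`. -/
def padicFourier (μ : MeasureTheory.Measure ℚ_[p]) (φ : ℚ_[p] → ℂ) (ξ : ℚ_[p]) : ℂ :=
  ∫ x, padicChar p (ξ * x) * φ x ∂μ

/-- The inverse `p`-adic Fourier transform `𝓕_p⁻¹ψ(x) = ∫ χ_p(-xξ) ψ(ξ) dμ(ξ)`. -/
def padicFourierInv (μ : MeasureTheory.Measure ℚ_[p]) (ψ : ℚ_[p] → ℂ) (x : ℚ_[p]) : ℂ :=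
  ∫ ξ, padicChar p (-(x * ξ)) * ψ ξ ∂μ
namespace PadicProof

variable (p : ℕ) [hp : Fact p.Prime]

lemma one_lt_p : (1:ℝ) < p := by exact_mod_cast hp.out.one_lt
lemma p_pos : (0:ℝ) < p := lt_trans one_pos (one_lt_p p)
lemma pQ_ne : ((p:ℚ)) ≠ 0 := by exact_mod_cast hp.out.ne_zero

/-- The defining property of a "good" representative. -/
def Good (x : ℚ_[p]) (r : ℚ) : Prop :=
  (0 ≤ r ∧ r < 1 ∧ ∃ (m : ℤ) (n : ℕ), r = m / p ^ n) ∧ ‖x - (r : ℚ_[p])‖ ≤ 1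

lemma exists_good (x : ℚ_[p]) : ∃ r : ℚ, Good p x r := by
  obtain ⟨n, hn⟩ : ∃ n : ℕ, ‖x‖ < (p:ℝ) ^ n := pow_unbounded_of_one_lt _ (one_lt_p p)
  have hz : ‖(p:ℚ_[p]) ^ n * x‖ ≤ 1 := by
    rw [norm_mul, Padic.norm_p_pow]
    calc (p:ℝ) ^ (-n:ℤ) * ‖x‖ ≤ (p:ℝ) ^ (-n:ℤ) * (p:ℝ)^n := by
          apply mul_le_mul_of_nonneg_left hn.le (zpow_nonneg (p_pos p).le _)
      _ = 1 := by
          rw [← zpow_natCast ((p:ℝ)) n, ← zpow_add₀ (p_pos p).ne']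
          simp
  set z : ℤ_[p] := ⟨(p:ℚ_[p]) ^ n * x, hz⟩ with hzdef
  have hlt := PadicInt.appr_lt z n
  have hspec := PadicInt.appr_spec n z
  have hnorm : ‖z - (z.appr n : ℤ_[p])‖ ≤ (p:ℝ) ^ (-n : ℤ) :=
    (PadicInt.norm_le_pow_iff_mem_span_pow _ n).2 hspec
  refine ⟨(z.appr n : ℚ) / (p:ℚ) ^ n, ⟨⟨?_, ?_, ⟨(z.appr n : ℤ), n, by push_cast; ring⟩⟩, ?_⟩⟩
  · positivity
  · have hq : (0:ℚ) < (p:ℚ)^n := by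
      apply pow_pos; exact_mod_cast hp.out.pos
    rw [div_lt_one hq]
    exact_mod_cast hlt
  · have hxz : x - (((z.appr n : ℚ) / (p:ℚ) ^ n : ℚ) : ℚ_[p])
        = ((p:ℚ_[p]) ^ n)⁻¹ * ((z : ℚ_[p]) - (z.appr n : ℚ_[p])) := by
      have hpn : ((p:ℚ_[p]) ^ n) ≠ 0 := by
        apply pow_ne_zero; exact_mod_cast (Nat.cast_ne_zero (R := ℚ_[p])).2 hp.out.ne_zero
      rw [hzdef]
      push_cast
      field_simp
    rw [hxz, norm_mul, norm_inv, Padic.norm_p_pow]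
    have hcoe : ‖(z:ℚ_[p]) - ((z.appr n : ℤ_[p]) : ℚ_[p])‖ ≤ (p:ℝ)^(-n:ℤ) := by
      rw [← PadicInt.coe_sub] at *
      exact hnorm
    have : ((z.appr n : ℤ_[p]) : ℚ_[p]) = ((z.appr n : ℕ) : ℚ_[p]) := by push_cast; ring
    rw [this] at hcoe
    calc ((p:ℝ) ^ (-n:ℤ))⁻¹ * ‖(z:ℚ_[p]) - (z.appr n : ℚ_[p])‖
        ≤ ((p:ℝ) ^ (-n:ℤ))⁻¹ * (p:ℝ)^(-n:ℤ) := by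
          apply mul_le_mul_of_nonneg_left hcoe (by positivity)
      _ = 1 := by
          exact inv_mul_cancel₀ (zpow_ne_zero _ (p_pos p).ne')

lemma fract_good (x : ℚ_[p]) : Good p x (padicFract p x) := by
  have h := exists_good p x
  simp only [Good] at h
  rw [padicFract, dif_pos h]
  exact h.choose_spec

end PadicProof
namespace PadicProof
variable (p : ℕ) [hp : Fact p.Prime]

/-- A rational with p-power denominator and p-adic norm ≤ 1 is an integer. -/
lemma int_of_good (r : ℚ) (hr : ∃ (m : ℤ) (n : ℕ), r = m / p ^ n)
    (h1 : ‖((r:ℚ) : ℚ_[p])‖ ≤ 1) : ∃ k : ℤ, r = k := by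
  obtain ⟨m, n, rfl⟩ := hr
  have hdvd : ((p:ℤ) ^ n) ∣ m := by
    rw [← Padic.norm_int_le_pow_iff_dvd]
    have : ((m : ℚ_[p])) = ((m : ℚ) : ℚ_[p]) := by push_cast; ring
    rw [this]
    have heq : ((m:ℚ) : ℚ_[p]) = ((p:ℚ_[p])^n) * ((((m:ℚ) / p ^ n : ℚ)) : ℚ_[p]) := by
      push_cast
      rw [mul_div_cancel₀]
      exact pow_ne_zero _ (by exact_mod_cast (Nat.cast_ne_zero (R := ℚ_[p])).2 hp.out.ne_zero)
    rw [heq, norm_mul, Padic.norm_p_pow]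
    calc (p:ℝ)^(-n:ℤ) * ‖(((m:ℚ) / p ^ n : ℚ) : ℚ_[p])‖ ≤ (p:ℝ)^(-n:ℤ) * 1 :=
        mul_le_mul_of_nonneg_left h1 (by positivity)
      _ = (p:ℝ)^(-n:ℤ) := mul_one _
  obtain ⟨k, rfl⟩ := hdvd
  refine ⟨k, ?_⟩
  have hpn : ((p:ℚ))^n ≠ 0 := pow_ne_zero _ (pQ_ne p)
  push_cast
  field_simp

lemma good_denom_sub {r s : ℚ} (hr : ∃ (m : ℤ) (n : ℕ), r = m / p ^ n)
    (hs : ∃ (m : ℤ) (n : ℕ), s = m / p ^ n) : ∃ (m : ℤ) (n : ℕ), r - s = m / p ^ n := by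
  obtain ⟨a, u, rfl⟩ := hr
  obtain ⟨b, v, rfl⟩ := hs
  refine ⟨a * p ^ v - b * p ^ u, u + v, ?_⟩
  have hpn : ((p:ℚ)) ≠ 0 := pQ_ne p
  push_cast
  field_simp
  ring

lemma good_denom_add {r s : ℚ} (hr : ∃ (m : ℤ) (n : ℕ), r = m / p ^ n)
    (hs : ∃ (m : ℤ) (n : ℕ), s = m / p ^ n) : ∃ (m : ℤ) (n : ℕ), r + s = m / p ^ n := by
  obtain ⟨a, u, rfl⟩ := hr
  obtain ⟨b, v, rfl⟩ := hs
  refine ⟨a * p ^ v + b * p ^ u, u + v, ?_⟩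
  have hpn : ((p:ℚ)) ≠ 0 := pQ_ne p
  push_cast
  rw [div_add_div _ _ (pow_ne_zero u hpn) (pow_ne_zero v hpn), pow_add]
  ring_nf

lemma exp_rat_int (k : ℤ) : Complex.exp (2 * Real.pi * Complex.I * (k:ℂ)) = 1 := by
  rw [show (2 * Real.pi * Complex.I * (k:ℂ)) = (k:ℂ) * (2 * Real.pi * Complex.I) by ring]
  exact Complex.exp_int_mul_two_pi_mul_I k

/-- The character value only depends on a valid representative. -/
lemma padicChar_eq_of (x : ℚ_[p]) (r : ℚ) (hden : ∃ (m : ℤ) (n : ℕ), r = m / p ^ n)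
    (hx : ‖x - (r : ℚ_[p])‖ ≤ 1) :
    padicChar p x = Complex.exp (2 * Real.pi * Complex.I * (r:ℂ)) := by
  obtain ⟨⟨h0, h1, hdenf⟩, hnormf⟩ := fract_good p x
  set s := padicFract p x with hs
  have hsub : ‖((s - r : ℚ) : ℚ_[p])‖ ≤ 1 := by
    push_cast
    have : ((s:ℚ_[p]) - r) = (x - r) + (-(x - s)) := by ring
    rw [this]
    refine le_trans (Padic.nonarchimedean _ _) (max_le hx ?_)
    rwa [norm_neg]
  obtain ⟨k, hk⟩ := int_of_good p (s - r) (good_denom_sub p hdenf hden) hsub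
  have hsr : (s : ℂ) = (r : ℂ) + (k : ℂ) := by
    have : s = r + (k:ℚ) := by linarith [hk, sub_eq_iff_eq_add.mp hk]
    exact_mod_cast congrArg (Rat.cast : ℚ → ℂ) this
  rw [padicChar, ← hs, hsr, mul_add, Complex.exp_add, exp_rat_int, mul_one]

lemma padicChar_one_of {x : ℚ_[p]} (h : ‖x‖ ≤ 1) : padicChar p x = 1 := by
  rw [padicChar_eq_of p x 0 ⟨0, 0, by norm_num⟩ (by simpa using h)]
  simp

lemma padicChar_add (x y : ℚ_[p]) : padicChar p (x + y) = padicChar p x * padicChar p y := by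
  obtain ⟨⟨_, _, hdx⟩, hnx⟩ := fract_good p x
  obtain ⟨⟨_, _, hdy⟩, hny⟩ := fract_good p y
  rw [padicChar_eq_of p (x + y) (padicFract p x + padicFract p y) (good_denom_add p hdx hdy)
      (by push_cast
          have : x + y - ((padicFract p x : ℚ_[p]) + (padicFract p y : ℚ_[p]))
              = (x - padicFract p x) + (y - padicFract p y) := by ring
          rw [this]
          exact le_trans (Padic.nonarchimedean _ _) (max_le hnx hny))]
  rw [padicChar, padicChar]
  rw [← Complex.exp_add]
  push_cast
  ring_nf

lemma padicChar_p_inv : padicChar p ((p:ℚ_[p])⁻¹) = Complex.exp (2 * Real.pi * Complex.I * ((1:ℚ)/p : ℚ)) := by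
  apply padicChar_eq_of p _ _ ⟨1, 1, by push_cast; ring⟩
  have : ((((1:ℚ)/p : ℚ)) : ℚ_[p]) = (p:ℚ_[p])⁻¹ := by push_cast; ring
  rw [this, sub_self, norm_zero]
  norm_num

lemma padicChar_p_inv_ne_one : padicChar p ((p:ℚ_[p])⁻¹) ≠ 1 := by
  rw [padicChar_p_inv]
  intro h
  rw [Complex.exp_eq_one_iff] at h
  obtain ⟨n, hn⟩ := h
  have hI : (2 * Real.pi * Complex.I) ≠ 0 := by
    simp [Real.pi_ne_zero, Complex.I_ne_zero]
  have hfrac : ((((1:ℚ)/p:ℚ)):ℂ) = (n:ℂ) := by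
    apply mul_left_cancel₀ hI
    rw [hn]; ring
  have hreal : (1:ℝ)/p = (n:ℝ) := by
    have h2 : (((1:ℝ)/p : ℝ) : ℂ) = ((n:ℝ) : ℂ) := by push_cast at hfrac ⊢; exact_mod_cast hfrac
    exact_mod_cast h2
  have h0 : (0:ℝ) < 1/p := div_pos one_pos (p_pos p)
  have h1 : (1:ℝ)/p < 1 := by
    rw [div_lt_one (p_pos p)]; exact one_lt_p p
  rw [hreal] at h0 h1
  have : (0:ℤ) < n := by exact_mod_cast h0
  have : (n:ℤ) < 1 := by exact_mod_cast h1
  omega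

lemma padicChar_continuous : Continuous (padicChar p) := by
  apply IsLocallyConstant.continuous
  rw [IsLocallyConstant.iff_exists_open]
  intro x
  refine ⟨Metric.closedBall x 1, IsUltrametricDist.isOpen_closedBall x one_ne_zero, by
    simp, fun y hy => ?_⟩
  have h1 : ‖y - x‖ ≤ 1 := by
    rw [← dist_eq_norm]; exact Metric.mem_closedBall.1 hy
  have : padicChar p y = padicChar p (y - x) * padicChar p x := by
    rw [← padicChar_add]; ring_nf
  rw [this, padicChar_one_of p h1, one_mul]

lemma padicChar_norm (x : ℚ_[p]) : ‖padicChar p x‖ = 1 := by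
  rw [padicChar]
  have : (2 * Real.pi * Complex.I * ((padicFract p x : ℚ) : ℂ))
      = (((2 * Real.pi * (padicFract p x : ℝ)) : ℝ) : ℂ) * Complex.I := by
    push_cast; ring
  rw [this, Complex.norm_exp_ofReal_mul_I]

end PadicProof
namespace PadicProof
variable (p : ℕ) [hp : Fact p.Prime]

/-- The ball `B_m = {x : |x|_p ≤ p^m}`. -/
def B (m : ℤ) : Set ℚ_[p] := {x : ℚ_[p] | ‖x‖ ≤ (p:ℝ) ^ m}

lemma isClosed_B (m : ℤ) : IsClosed (B p m) :=
  isClosed_le (continuous_norm) continuous_const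

lemma measurableSet_B (m : ℤ) : MeasurableSet (B p m) := (isClosed_B p m).measurableSet

lemma B_eq_closedBall (m : ℤ) : B p m = Metric.closedBall 0 ((p:ℝ)^m) := by
  ext x; simp [B, Metric.mem_closedBall, dist_eq_norm]

lemma isCompact_B (m : ℤ) : IsCompact (B p m) := by
  rw [B_eq_closedBall]; exact isCompact_closedBall _ _

lemma mem_B_add {m : ℤ} {x y : ℚ_[p]} (hy : ‖y‖ ≤ (p:ℝ)^m) (hx : x ∈ B p m) :
    x + y ∈ B p m :=
  le_trans (Padic.nonarchimedean x y) (max_le hx hy)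

lemma mem_B_add_iff {m : ℤ} {y : ℚ_[p]} (hy : ‖y‖ ≤ (p:ℝ)^m) (x : ℚ_[p]) :
    x + y ∈ B p m ↔ x ∈ B p m := by
  constructor
  · intro h
    have := mem_B_add p (y := -y) (by rwa [norm_neg]) h
    simpa using this
  · exact mem_B_add p hy

variable (μ : MeasureTheory.Measure ℚ_[p]) [μ.IsAddHaarMeasure]

lemma meas_B_step (m : ℤ) : μ (B p m) = p * μ (B p (m - 1)) := by
  classical
  set c : Fin p → ℚ_[p] := fun k => (k : ℚ_[p]) * (p:ℚ_[p]) ^ (-m) with hc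
  set S : Fin p → Set ℚ_[p] := fun k => {x | ‖x - c k‖ ≤ (p:ℝ) ^ (m - 1)} with hS
  have hppos : (0:ℝ) < p := p_pos p
  have hpQp : ((p:ℚ_[p])) ≠ 0 := by exact_mod_cast (Nat.cast_ne_zero (R := ℚ_[p])).2 hp.out.ne_zero
  have hSm : ∀ k, μ (S k) = μ (B p (m - 1)) := by
    intro k
    have : S k = (fun x => (-(c k)) + x) ⁻¹' (B p (m-1)) := by
      ext x
      simp only [hS, Set.mem_setOf_eq, Set.mem_preimage, B, neg_add_eq_sub]
    rw [this, measure_preimage_add]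
  have hcover : B p m = ⋃ k : Fin p, S k := by
    apply Set.Subset.antisymm
    · intro x hx
      have hw : ‖(p:ℚ_[p]) ^ m * x‖ ≤ 1 := by
        rw [norm_mul, Padic.norm_p_zpow]
        calc (p:ℝ)^(-m) * ‖x‖ ≤ (p:ℝ)^(-m) * (p:ℝ)^m :=
            mul_le_mul_of_nonneg_left hx (by positivity)
          _ = 1 := by rw [← zpow_add₀ hppos.ne']; simp
      set z : ℤ_[p] := ⟨(p:ℚ_[p]) ^ m * x, hw⟩ with hz
      have hlt : z.appr 1 < p := by simpa using PadicInt.appr_lt z 1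
      have hnorm : ‖z - ((z.appr 1 : ℕ) : ℤ_[p])‖ ≤ (p:ℝ) ^ (-1 : ℤ) := by
        have := (PadicInt.norm_le_pow_iff_mem_span_pow (z - ((z.appr 1 : ℕ) : ℤ_[p])) 1).2
          (by simpa using PadicInt.appr_spec 1 z)
        simpa using this
      refine Set.mem_iUnion.2 ⟨⟨z.appr 1, hlt⟩, ?_⟩
      simp only [hS, Set.mem_setOf_eq]
      have hxc : x - c ⟨z.appr 1, hlt⟩ = (p:ℚ_[p]) ^ (-m) * ((z : ℚ_[p]) - ((z.appr 1 : ℕ) : ℚ_[p])) := by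
        simp only [hc, hz]
        rw [mul_sub]
        congr 1
        · rw [← mul_assoc, ← zpow_add₀ hpQp]
          simp
        · ring
      rw [hxc, norm_mul, Padic.norm_p_zpow]
      have hcoe : ‖(z : ℚ_[p]) - ((z.appr 1 : ℕ) : ℚ_[p])‖ ≤ (p:ℝ) ^ (-1 : ℤ) := by
        have h3 : ((z : ℚ_[p]) - ((z.appr 1 : ℕ) : ℚ_[p]))
            = (((z - ((z.appr 1 : ℕ) : ℤ_[p]) : ℤ_[p])) : ℚ_[p]) := by push_cast; ring
        rw [h3, PadicInt.padic_norm_e_of_padicInt]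
        exact hnorm
      calc (p:ℝ)^(-(-m)) * ‖(z : ℚ_[p]) - ((z.appr 1 : ℕ) : ℚ_[p])‖
          ≤ (p:ℝ)^m * (p:ℝ)^(-1:ℤ) := by
            rw [neg_neg]
            exact mul_le_mul_of_nonneg_left hcoe (by positivity)
        _ = (p:ℝ)^(m-1) := by rw [← zpow_add₀ hppos.ne']; ring_nf
    · intro x hx
      obtain ⟨k, hk⟩ := Set.mem_iUnion.1 hx
      simp only [hS, Set.mem_setOf_eq] at hk
      have hck : ‖c k‖ ≤ (p:ℝ)^m := by
        simp only [hc]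
        rw [norm_mul, Padic.norm_p_zpow, neg_neg]
        have : ‖((k : ℕ) : ℚ_[p])‖ ≤ 1 := by
          rw [show (((k:ℕ) : ℚ_[p])) = (((k:ℕ) : ℤ) : ℚ_[p]) by push_cast; ring]
          exact Padic.norm_int_le_one _
        calc ‖((k : ℕ) : ℚ_[p])‖ * (p:ℝ)^m ≤ 1 * (p:ℝ)^m :=
            mul_le_mul_of_nonneg_right this (by positivity)
          _ = (p:ℝ)^m := one_mul _
      have : ‖x‖ = ‖(x - c k) + c k‖ := by ring_nf
      rw [B, Set.mem_setOf_eq, this]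
      refine le_trans (Padic.nonarchimedean _ _) (max_le (le_trans hk ?_) hck)
      exact zpow_le_zpow_right₀ (one_lt_p p).le (by omega)
  have hdisj : Pairwise (Function.onFun Disjoint S) := by
    intro k k' hkk'
    simp only [Function.onFun]
    rw [Set.disjoint_left]
    intro x hxk hxk'
    simp only [hS, Set.mem_setOf_eq] at hxk hxk'
    have hdiff : ‖c k - c k'‖ ≤ (p:ℝ)^(m-1) := by
      have : c k - c k' = (x - c k') - (x - c k) := by ring
      rw [this, sub_eq_add_neg]
      refine le_trans (Padic.nonarchimedean _ _) (max_le hxk' ?_)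
      rwa [norm_neg]
    have hdd : c k - c k' = (((k : ℤ) - (k' : ℤ) : ℤ) : ℚ_[p]) * (p:ℚ_[p])^(-m) := by
      simp only [hc]; push_cast; ring
    rw [hdd, norm_mul, Padic.norm_p_zpow, neg_neg] at hdiff
    have hpm : (0:ℝ) < (p:ℝ)^m := by positivity
    have hint : ‖((((k:ℤ) - (k':ℤ)) : ℤ) : ℚ_[p])‖ ≤ (p:ℝ)^(-1:ℤ) := by
      have := (mul_le_mul_iff_left₀ hpm).1 (by
        calc ‖((((k:ℤ) - (k':ℤ)) : ℤ) : ℚ_[p])‖ * (p:ℝ)^m ≤ (p:ℝ)^(m-1) := hdiff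
          _ = (p:ℝ)^(-1:ℤ) * (p:ℝ)^m := by rw [← zpow_add₀ (p_pos p).ne']; ring_nf)
      exact this
    have hdvd : ((p:ℤ) ^ 1) ∣ ((k:ℤ) - (k':ℤ)) := by
      rw [← Padic.norm_int_le_pow_iff_dvd]
      simpa using hint
    rw [pow_one] at hdvd
    have hne : (k:ℤ) - (k':ℤ) ≠ 0 := by
      intro h
      apply hkk'
      have : (k:ℤ) = (k':ℤ) := by omega
      exact Fin.ext (by exact_mod_cast this)
    have habs : ((k:ℤ) - (k':ℤ)).natAbs < p := by
      have h1 : (k:ℤ) < p := by exact_mod_cast k.2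
      have h2 : (k':ℤ) < p := by exact_mod_cast k'.2
      omega
    have hdvdn : p ∣ ((k:ℤ) - (k':ℤ)).natAbs := by
      have h4 := Int.natAbs_dvd_natAbs.2 hdvd
      simpa using h4
    have : p ≤ ((k:ℤ) - (k':ℤ)).natAbs := Nat.le_of_dvd (Int.natAbs_pos.2 hne) hdvdn
    omega
  rw [hcover, measure_iUnion hdisj (fun k => by
    have : S k = (fun x => (-(c k)) + x) ⁻¹' (B p (m-1)) := by
      ext x
      simp only [hS, Set.mem_setOf_eq, Set.mem_preimage, B, neg_add_eq_sub]
    rw [this]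
    exact (measurableSet_B p (m-1)).preimage (measurable_const_add _))]
  rw [tsum_fintype]
  simp only [hSm]
  rw [Finset.sum_const, Finset.card_univ, Fintype.card_fin, nsmul_eq_mul]

lemma meas_B (hμ : μ {x : ℚ_[p] | ‖x‖ ≤ 1} = 1) (m : ℤ) : μ (B p m) = (p : ENNReal) ^ m := by
  have hp0 : (p : ENNReal) ≠ 0 := by
    simp [hp.out.ne_zero]
  have hpt : (p : ENNReal) ≠ ⊤ := by simp
  have base : μ (B p 0) = 1 := by
    have : B p 0 = {x : ℚ_[p] | ‖x‖ ≤ 1} := by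
      ext x; simp [B]
    rw [this, hμ]
  induction m using Int.induction_on with
  | zero => simpa using base
  | succ n ih =>
      have := meas_B_step p μ ((n:ℤ)+1)
      rw [add_sub_cancel_right, ih] at this
      rw [this, ENNReal.zpow_add hp0 hpt, zpow_one]
      ring
  | pred n ih =>
      have := meas_B_step p μ (-(n:ℤ))
      rw [ih] at this
      have h2 : μ (B p (-(n:ℤ) - 1)) = (p:ENNReal)⁻¹ * (p:ENNReal) ^ (-(n:ℤ)) := by
        rw [this, ← mul_assoc, ENNReal.inv_mul_cancel hp0 hpt, one_mul]
      rw [show (-((n:ℕ):ℤ) - 1) = (-(n:ℤ) - 1) by push_cast; ring] at *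
      rw [h2, show ((p:ENNReal))⁻¹ = (p:ENNReal) ^ (-1:ℤ) by
            rw [ENNReal.zpow_neg, zpow_one],
          ← ENNReal.zpow_add hp0 hpt]
      ring_nf
  
lemma meas_B_toReal (hμ : μ {x : ℚ_[p] | ‖x‖ ≤ 1} = 1) (m : ℤ) :
    (μ (B p m)).toReal = (p:ℝ) ^ m := by
  rw [meas_B p μ hμ m]
  rcases m with n | n
  · simp [ENNReal.toReal_pow]
  · rw [zpow_negSucc, zpow_negSucc, ENNReal.toReal_inv, ENNReal.toReal_pow]
    simp

lemma meas_B_lt_top (m : ℤ) : μ (B p m) < ⊤ :=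
  (isCompact_B p m).measure_lt_top

end PadicProof
namespace PadicProof
variable (p : ℕ) [hp : Fact p.Prime]
variable (μ : MeasureTheory.Measure ℚ_[p]) [μ.IsAddHaarMeasure]

lemma norm_ge_of_not_le {ξ : ℚ_[p]} {m : ℤ} (h : ¬ ‖ξ‖ ≤ (p:ℝ) ^ m) :
    (p:ℝ) ^ (m + 1) ≤ ‖ξ‖ := by
  rw [Padic.norm_le_pow_iff_norm_lt_pow_add_one] at h
  exact not_lt.1 h

lemma xi_ne_zero {ξ : ℚ_[p]} {m : ℤ} (h : ¬ ‖ξ‖ ≤ (p:ℝ) ^ m) : ξ ≠ 0 := by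
  intro h0
  apply h
  rw [h0, norm_zero]
  exact zpow_nonneg (p_pos p).le m

/-- The canonical "bad shift": for `‖ξ‖ > p^{-l}` the element `y = (pξ)⁻¹` has
`‖y‖ ≤ p^l` and `ξ y = p⁻¹`. -/
lemma shift_norm_le {ξ : ℚ_[p]} {l : ℤ} (h : ¬ ‖ξ‖ ≤ (p:ℝ) ^ (-l)) :
    ‖((p:ℚ_[p]) * ξ)⁻¹‖ ≤ (p:ℝ) ^ l := by
  have hξ : ξ ≠ 0 := xi_ne_zero p h
  have hge : (p:ℝ) ^ (-l + 1) ≤ ‖ξ‖ := norm_ge_of_not_le p h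
  have hξpos : (0:ℝ) < ‖ξ‖ := norm_pos_iff.2 hξ
  rw [norm_inv, norm_mul, Padic.norm_p]
  rw [mul_inv, inv_inv]
  have h1 : ‖ξ‖⁻¹ ≤ (p:ℝ) ^ (l - 1) := by
    rw [inv_le_comm₀ hξpos (zpow_pos (p_pos p) _)]
    calc ((p:ℝ) ^ (l-1))⁻¹ = (p:ℝ) ^ (-(l-1)) := by
          rw [← zpow_neg]
      _ = (p:ℝ) ^ (-l + 1) := by ring_nf
      _ ≤ ‖ξ‖ := hge
  calc (p:ℝ) * ‖ξ‖⁻¹ ≤ (p:ℝ) * (p:ℝ) ^ (l - 1) := by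
        exact mul_le_mul_of_nonneg_left h1 (p_pos p).le
    _ = (p:ℝ) ^ l := by
        rw [← zpow_one_add₀ (p_pos p).ne']
        congr 1
        ring

lemma shift_mul {ξ : ℚ_[p]} (hξ : ξ ≠ 0) : ξ * ((p:ℚ_[p]) * ξ)⁻¹ = (p:ℚ_[p])⁻¹ := by
  have hpQp : ((p:ℚ_[p])) ≠ 0 := by exact_mod_cast (Nat.cast_ne_zero (R := ℚ_[p])).2 hp.out.ne_zero
  field_simp

/-- Vanishing of the Fourier transform outside `B_{-l}` for `B_l`-invariant functions. -/
lemma fourier_vanish (φ : ℚ_[p] → ℂ) (l : ℤ)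
    (hinv : ∀ x y : ℚ_[p], ‖y‖ ≤ (p:ℝ) ^ l → φ (x + y) = φ x) :
    ∀ ξ : ℚ_[p], ¬ ‖ξ‖ ≤ (p:ℝ) ^ (-l) → padicFourier p μ φ ξ = 0 := by
  intro ξ hξ
  have hξ0 : ξ ≠ 0 := xi_ne_zero p hξ
  set y : ℚ_[p] := ((p:ℚ_[p]) * ξ)⁻¹ with hy
  have hyn : ‖y‖ ≤ (p:ℝ) ^ l := shift_norm_le p hξ
  have key : padicFourier p μ φ ξ = padicChar p ((p:ℚ_[p])⁻¹) * padicFourier p μ φ ξ := by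
    conv_lhs => rw [padicFourier,
      ← integral_add_right_eq_self (μ := μ) (fun x => padicChar p (ξ * x) * φ x) y]
    have : ∀ x : ℚ_[p], padicChar p (ξ * (x + y)) * φ (x + y)
        = padicChar p ((p:ℚ_[p])⁻¹) * (padicChar p (ξ * x) * φ x) := by
      intro x
      rw [hinv x y hyn, show ξ * (x + y) = ξ * x + ξ * y by ring, padicChar_add,
        hy, shift_mul p hξ0]
      ring
    simp_rw [this]
    rw [integral_const_mul]
    rfl
  have hne : padicChar p ((p:ℚ_[p])⁻¹) - 1 ≠ 0 :=
    sub_ne_zero.2 (padicChar_p_inv_ne_one p)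
  have : (padicChar p ((p:ℚ_[p])⁻¹) - 1) * padicFourier p μ φ ξ = 0 := by
    rw [sub_mul, one_mul, ← key]
    ring
  rcases mul_eq_zero.1 this with h | h
  · exact absurd h hne
  · exact h

/-- Invariance of the Fourier transform for functions supported in `B_N`. -/
lemma fourier_invariant (φ : ℚ_[p] → ℂ) (N : ℤ)
    (hsupp : ∀ x : ℚ_[p], ¬ ‖x‖ ≤ (p:ℝ) ^ N → φ x = 0) :
    ∀ ξ η : ℚ_[p], ‖η‖ ≤ (p:ℝ) ^ (-N) →
      padicFourier p μ φ (ξ + η) = padicFourier p μ φ ξ := by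
  intro ξ η hη
  rw [padicFourier, padicFourier]
  congr 1
  funext x
  by_cases hx : ‖x‖ ≤ (p:ℝ) ^ N
  · have hηx : ‖η * x‖ ≤ 1 := by
      rw [norm_mul]
      calc ‖η‖ * ‖x‖ ≤ (p:ℝ)^(-N) * (p:ℝ)^N :=
          mul_le_mul hη hx (norm_nonneg _) (by positivity)
        _ = 1 := by rw [← zpow_add₀ (p_pos p).ne']; simp
    rw [show (ξ + η) * x = ξ * x + η * x by ring, padicChar_add,
      padicChar_one_of p hηx, mul_one]
  · rw [hsupp x hx, mul_zero, mul_zero]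

/-- The basic character-integral over a ball. -/
lemma char_ball_integral (hμ : μ {x : ℚ_[p] | ‖x‖ ≤ 1} = 1) (m : ℤ) (ξ : ℚ_[p]) :
    ∫ x in B p m, padicChar p (ξ * x) ∂μ
      = if ‖ξ‖ ≤ (p:ℝ) ^ (-m) then (((p:ℝ) ^ m : ℝ) : ℂ) else 0 := by
  by_cases h : ‖ξ‖ ≤ (p:ℝ) ^ (-m)
  · rw [if_pos h]
    have heq : Set.EqOn (fun x => padicChar p (ξ * x)) (fun _ => (1:ℂ)) (B p m) := by
      intro x hx
      apply padicChar_one_of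
      rw [norm_mul]
      calc ‖ξ‖ * ‖x‖ ≤ (p:ℝ)^(-m) * (p:ℝ)^m :=
          mul_le_mul h hx (norm_nonneg _) (by positivity)
        _ = 1 := by rw [← zpow_add₀ (p_pos p).ne']; simp
    rw [setIntegral_congr_fun (measurableSet_B p m) heq, setIntegral_const, measureReal_def,
      meas_B_toReal p μ hμ m]
    simp
  · rw [if_neg h]
    have hξ0 : ξ ≠ 0 := xi_ne_zero p h
    set y : ℚ_[p] := ((p:ℚ_[p]) * ξ)⁻¹ with hy
    have hyn : ‖y‖ ≤ (p:ℝ) ^ m := shift_norm_le p (l := m) h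
    set I := ∫ x in B p m, padicChar p (ξ * x) ∂μ with hI
    have key : I = padicChar p ((p:ℚ_[p])⁻¹) * I := by
      rw [hI, ← integral_indicator (measurableSet_B p m)]
      conv_lhs => rw [← integral_add_right_eq_self (μ := μ)
        ((B p m).indicator (fun x => padicChar p (ξ * x))) y]
      have hpt : ∀ x : ℚ_[p], (B p m).indicator (fun x => padicChar p (ξ * x)) (x + y)
          = padicChar p ((p:ℚ_[p])⁻¹) * (B p m).indicator (fun x => padicChar p (ξ * x)) x := by
        intro x
        by_cases hx : x ∈ B p m
        · rw [Set.indicator_of_mem ((mem_B_add_iff p hyn x).2 hx),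
            Set.indicator_of_mem hx]
          rw [show ξ * (x + y) = ξ * x + ξ * y by ring, padicChar_add, hy,
            shift_mul p hξ0]
          ring
        · rw [Set.indicator_of_notMem (fun hmem => hx ((mem_B_add_iff p hyn x).1 hmem)),
            Set.indicator_of_notMem hx, mul_zero]
      simp_rw [hpt]
      rw [integral_const_mul]
    have hne : padicChar p ((p:ℚ_[p])⁻¹) - 1 ≠ 0 :=
      sub_ne_zero.2 (padicChar_p_inv_ne_one p)
    have hz : (padicChar p ((p:ℚ_[p])⁻¹) - 1) * I = 0 := by
      rw [sub_mul, one_mul, ← key]; ring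
    rcases mul_eq_zero.1 hz with h' | h'
    · exact absurd h' hne
    · exact h'

end PadicProof
namespace PadicProof
variable (p : ℕ) [hp : Fact p.Prime]

lemma exists_uniform (φ : ℚ_[p] → ℂ) (hlc : IsLocallyConstant φ) (hcs : HasCompactSupport φ) :
    ∃ l N : ℤ, l ≤ N ∧ (∀ x : ℚ_[p], ¬ ‖x‖ ≤ (p:ℝ) ^ N → φ x = 0) ∧
      (∀ x y : ℚ_[p], ‖y‖ ≤ (p:ℝ) ^ l → φ (x + y) = φ x) := by
  classical
  set K := tsupport φ with hK
  have hKc : IsCompact K := hcs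
  -- radii of local constancy
  have hrad : ∀ x : ℚ_[p], ∃ m : ℤ, ∀ y ∈ Metric.closedBall x ((p:ℝ) ^ m), φ y = φ x := by
    intro x
    obtain ⟨U, hUo, hxU, hUc⟩ := hlc.exists_open x
    obtain ⟨ε, hε, hball⟩ := Metric.isOpen_iff.1 hUo x hxU
    obtain ⟨n, hn⟩ := exists_pow_lt_of_lt_one hε
      (show (p:ℝ)⁻¹ < 1 by rw [inv_lt_one_iff₀]; right; exact one_lt_p p)
    refine ⟨-n, fun y hy => hUc y (hball ?_)⟩
    apply Metric.closedBall_subset_ball _ hy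
    calc (p:ℝ) ^ (-n:ℤ) = ((p:ℝ)⁻¹) ^ n := by
          rw [zpow_neg, zpow_natCast, inv_pow]
      _ < ε := hn
  choose rad hrads using hrad
  -- cover the support
  have hcov : K ⊆ ⋃ x ∈ K, Metric.ball x ((p:ℝ) ^ (rad x)) := by
    intro x hx
    exact Set.mem_biUnion hx (Metric.mem_ball_self (zpow_pos (p_pos p) _))
  obtain ⟨t, htK, htfin, htcov⟩ := hKc.elim_finite_subcover_image
    (fun x (_ : x ∈ K) => Metric.isOpen_ball) hcov
  set F := htfin.toFinset with hF
  have hFK : ∀ z ∈ F, z ∈ K := fun z hz => htK (htfin.mem_toFinset.1 hz)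
  -- the uniform radius
  set l₀ : ℤ := if h : F.Nonempty then F.inf' h rad else 0 with hl₀
  have hl₀le : ∀ z ∈ F, l₀ ≤ rad z := by
    intro z hz
    rw [hl₀, dif_pos ⟨z, hz⟩]
    exact Finset.inf'_le rad hz
  -- invariance at radius l₀
  have hinv₀ : ∀ x y : ℚ_[p], ‖y‖ ≤ (p:ℝ) ^ l₀ → φ (x + y) = φ x := by
    intro x y hy
    by_cases hx : ∃ z ∈ F, x ∈ Metric.ball z ((p:ℝ) ^ (rad z))
    · obtain ⟨z, hzF, hxz⟩ := hx
      have hxz' : x ∈ Metric.closedBall z ((p:ℝ) ^ (rad z)) :=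
        Metric.ball_subset_closedBall hxz
      have hxyz : x + y ∈ Metric.closedBall z ((p:ℝ) ^ (rad z)) := by
        rw [Metric.mem_closedBall] at hxz' ⊢
        refine le_trans (IsUltrametricDist.dist_triangle_max (x+y) x z) (max_le ?_ hxz')
        rw [dist_eq_norm, add_sub_cancel_left]
        exact le_trans hy (zpow_le_zpow_right₀ (one_lt_p p).le (hl₀le z hzF))
      rw [hrads z _ hxyz, hrads z _ hxz']
    · by_cases hx' : ∃ z ∈ F, x + y ∈ Metric.ball z ((p:ℝ) ^ (rad z))
      · obtain ⟨z, hzF, hxz⟩ := hx'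
        have hxyz' : x + y ∈ Metric.closedBall z ((p:ℝ) ^ (rad z)) :=
          Metric.ball_subset_closedBall hxz
        have hxz' : x ∈ Metric.closedBall z ((p:ℝ) ^ (rad z)) := by
          rw [Metric.mem_closedBall] at hxyz' ⊢
          refine le_trans (IsUltrametricDist.dist_triangle_max x (x+y) z) (max_le ?_ hxyz')
          rw [dist_eq_norm]
          have : x - (x + y) = -y := by ring
          rw [this, norm_neg]
          exact le_trans hy (zpow_le_zpow_right₀ (one_lt_p p).le (hl₀le z hzF))
        rw [hrads z _ hxyz', hrads z _ hxz']
      · have hnx : x ∉ K := by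
          intro hmem
          obtain ⟨z, hz⟩ := Set.mem_iUnion.1 (htcov hmem)
          simp only [Set.mem_iUnion, exists_prop] at hz
          exact hx ⟨z, htfin.mem_toFinset.2 hz.1, hz.2⟩
        have hnxy : x + y ∉ K := by
          intro hmem
          obtain ⟨z, hz⟩ := Set.mem_iUnion.1 (htcov hmem)
          simp only [Set.mem_iUnion, exists_prop] at hz
          exact hx' ⟨z, htfin.mem_toFinset.2 hz.1, hz.2⟩
        rw [image_eq_zero_of_notMem_tsupport hnx, image_eq_zero_of_notMem_tsupport hnxy]
  -- support bound
  obtain ⟨R, hR⟩ := hKc.isBounded.subset_closedBall 0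
  obtain ⟨n₁, hn₁⟩ : ∃ n : ℕ, R < (p:ℝ) ^ n := pow_unbounded_of_one_lt _ (one_lt_p p)
  set N : ℤ := max (n₁ : ℤ) l₀ with hN
  refine ⟨min l₀ N, N, min_le_right _ _, ?_, ?_⟩
  · intro x hx
    apply image_eq_zero_of_notMem_tsupport
    intro hmem
    apply hx
    have := hR hmem
    rw [Metric.mem_closedBall, dist_eq_norm, sub_zero] at this
    calc ‖x‖ ≤ R := this
      _ ≤ (p:ℝ) ^ (n₁:ℤ) := by rw [zpow_natCast]; exact hn₁.le
      _ ≤ (p:ℝ) ^ N := zpow_le_zpow_right₀ (one_lt_p p).le (le_max_left _ _)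
  · intro x y hy
    exact hinv₀ x y (le_trans hy (zpow_le_zpow_right₀ (one_lt_p p).le (min_le_left _ _)))

end PadicProof
namespace PadicProof
variable (p : ℕ) [hp : Fact p.Prime]
variable (μ : MeasureTheory.Measure ℚ_[p]) [μ.IsAddHaarMeasure]

lemma isFiniteRestrict (m : ℤ) : MeasureTheory.IsFiniteMeasure (μ.restrict (B p m)) := by
  constructor
  rw [Measure.restrict_apply_univ]
  exact meas_B_lt_top p μ m

lemma double_fourier (hμ : μ {x : ℚ_[p] | ‖x‖ ≤ 1} = 1)
    (φ : ℚ_[p] → ℂ) (hlc : IsLocallyConstant φ) (hcs : HasCompactSupport φ) (x : ℚ_[p]) :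
    padicFourier p μ (padicFourier p μ φ) x = φ (-x) := by
  obtain ⟨l', N', hlN, hsupp, hinv⟩ := exists_uniform p φ hlc hcs
  have hφc : Continuous φ := hlc.continuous
  obtain ⟨C, hC⟩ : ∃ C : ℝ, ∀ z : ℚ_[p], ‖φ z‖ ≤ C :=
    hφc.bounded_above_of_compact_support hcs
  set ψ := padicFourier p μ φ with hψ
  have hψ0 : ∀ ξ : ℚ_[p], ¬ ‖ξ‖ ≤ (p:ℝ) ^ (-l') → ψ ξ = 0 := fourier_vanish p μ φ l' hinv
  have h1 : padicFourier p μ ψ x = ∫ ξ in B p (-l'), padicChar p (x * ξ) * ψ ξ ∂μ := by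
    rw [padicFourier]
    exact (setIntegral_eq_integral_of_forall_compl_eq_zero (fun ξ hξ => by
      rw [hψ0 ξ hξ, mul_zero])).symm
  have h2 : ∀ ξ : ℚ_[p], ψ ξ = ∫ y in B p N', padicChar p (ξ * y) * φ y ∂μ := fun ξ => by
    rw [hψ, padicFourier]
    exact (setIntegral_eq_integral_of_forall_compl_eq_zero (fun y hy => by
      rw [hsupp y hy, mul_zero])).symm
  rw [h1]
  have h3 : ∫ ξ in B p (-l'), padicChar p (x * ξ) * ψ ξ ∂μ
      = ∫ ξ in B p (-l'), ∫ y in B p N',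
          padicChar p (x * ξ) * (padicChar p (ξ * y) * φ y) ∂μ ∂μ := by
    apply setIntegral_congr_fun (measurableSet_B p _)
    intro ξ _
    show padicChar p (x * ξ) * ψ ξ
        = ∫ y in B p N', padicChar p (x * ξ) * (padicChar p (ξ * y) * φ y) ∂μ
    rw [h2 ξ, ← integral_const_mul]
  rw [h3]
  haveI := isFiniteRestrict p μ (-l')
  haveI := isFiniteRestrict p μ N'
  have hcont : Continuous (fun q : ℚ_[p] × ℚ_[p] =>
      padicChar p (x * q.1) * (padicChar p (q.1 * q.2) * φ q.2)) := by
    have hχ := padicChar_continuous p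
    exact ((hχ.comp (continuous_const.mul continuous_fst))).mul
      (((hχ.comp (continuous_fst.mul continuous_snd))).mul (hφc.comp continuous_snd))
  have hint : MeasureTheory.Integrable
      (Function.uncurry fun ξ y : ℚ_[p] => padicChar p (x * ξ) * (padicChar p (ξ * y) * φ y))
      ((μ.restrict (B p (-l'))).prod (μ.restrict (B p N'))) := by
    refine MeasureTheory.Integrable.mono' (MeasureTheory.integrable_const C)
      hcont.aestronglyMeasurable ?_
    filter_upwards with z
    show ‖padicChar p (x * z.1) * (padicChar p (z.1 * z.2) * φ z.2)‖ ≤ C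
    rw [norm_mul, norm_mul, padicChar_norm, padicChar_norm, one_mul, one_mul]
    exact hC z.2
  rw [MeasureTheory.integral_integral_swap hint]
  have h4 : ∀ y : ℚ_[p], ∫ ξ in B p (-l'), padicChar p (x * ξ) * (padicChar p (ξ * y) * φ y) ∂μ
      = φ y * (if ‖x + y‖ ≤ (p:ℝ) ^ l' then (((p:ℝ) ^ (-l') : ℝ) : ℂ) else 0) := by
    intro y
    have hpt : ∀ ξ : ℚ_[p], padicChar p (x * ξ) * (padicChar p (ξ * y) * φ y)
        = φ y * padicChar p ((x + y) * ξ) := by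
      intro ξ
      rw [show (x + y) * ξ = x * ξ + ξ * y by ring, padicChar_add]
      ring
    simp_rw [hpt]
    rw [integral_const_mul, char_ball_integral p μ hμ (-l') (x + y), neg_neg]
  simp_rw [h4]
  have h5 : ∀ y : ℚ_[p], φ y * (if ‖x + y‖ ≤ (p:ℝ) ^ l' then (((p:ℝ) ^ (-l') : ℝ) : ℂ) else 0)
      = φ (-x) * (if ‖x + y‖ ≤ (p:ℝ) ^ l' then (((p:ℝ) ^ (-l') : ℝ) : ℂ) else 0) := by
    intro y
    by_cases h : ‖x + y‖ ≤ (p:ℝ) ^ l'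
    · rw [if_pos h]
      congr 1
      rw [show y = -x + (x + y) by ring, hinv (-x) (x + y) h]
    · rw [if_neg h, mul_zero, mul_zero]
  simp_rw [h5]
  rw [integral_const_mul]
  by_cases hx : ‖x‖ ≤ (p:ℝ) ^ N'
  · set S : Set ℚ_[p] := {y : ℚ_[p] | ‖x + y‖ ≤ (p:ℝ) ^ l'} with hSdef
    have hSmeas : MeasurableSet S := by
      have : S = (fun y : ℚ_[p] => x + y) ⁻¹' (B p l') := rfl
      rw [this]
      exact (measurableSet_B p l').preimage (measurable_const_add x)
    have hSsub : S ⊆ B p N' := by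
      intro y hy
      have hy' : ‖x + y‖ ≤ (p:ℝ) ^ l' := hy
      have : y = (x + y) + (-x) := by ring
      show ‖y‖ ≤ (p:ℝ) ^ N'
      rw [this]
      refine le_trans (Padic.nonarchimedean _ _) (max_le ?_ ?_)
      · exact le_trans hy' (zpow_le_zpow_right₀ (one_lt_p p).le hlN)
      · rwa [norm_neg]
    have h6 : (fun y : ℚ_[p] => (if ‖x + y‖ ≤ (p:ℝ) ^ l' then (((p:ℝ) ^ (-l') : ℝ) : ℂ) else 0))
        = S.indicator (fun _ => (((p:ℝ) ^ (-l') : ℝ) : ℂ)) := by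
      funext y
      rw [Set.indicator_apply]
      rfl
    rw [h6, setIntegral_indicator hSmeas, Set.inter_eq_self_of_subset_right hSsub,
      setIntegral_const, measureReal_def]
    have hmS : μ S = μ (B p l') := by
      have : S = (fun y : ℚ_[p] => x + y) ⁻¹' (B p l') := rfl
      rw [this, measure_preimage_add]
    rw [hmS]
    have hms : (μ (B p l')).toReal = (p:ℝ) ^ l' := meas_B_toReal p μ hμ l'
    rw [hms, real_smul]
    rw [← Complex.ofReal_mul, ← zpow_add₀ (p_pos p).ne']
    simp
  · rw [hsupp (-x) (by rwa [norm_neg]), zero_mul]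

end PadicProof
/-- For `φ : ℚ_p → ℂ` locally constant with compact support and
`l, N ∈ ℤ`: `φ` vanishes outside `B_N` and is invariant under translation by elements
of `B_l` if and only if `𝓕_pφ` vanishes outside `B_{-l}` and is invariant under
translation by elements of `B_{-N}`.  Here `μ` is the Haar measure with `μ(ℤ_p) = 1`. -/
theorem support_constancy_fourier_iff (p : ℕ) [Fact p.Prime]
    (μ : MeasureTheory.Measure ℚ_[p]) [μ.IsAddHaarMeasure]
    (hμ : μ {x : ℚ_[p] | ‖x‖ ≤ 1} = 1)
    (φ : ℚ_[p] → ℂ) (hlc : IsLocallyConstant φ) (hcs : HasCompactSupport φ) (l N : ℤ) :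
    ((∀ x : ℚ_[p], ¬ ‖x‖ ≤ (p : ℝ) ^ N → φ x = 0) ∧
     (∀ x y : ℚ_[p], ‖y‖ ≤ (p : ℝ) ^ l → φ (x + y) = φ x))
    ↔ ((∀ ξ : ℚ_[p], ¬ ‖ξ‖ ≤ (p : ℝ) ^ (-l) → padicFourier p μ φ ξ = 0) ∧
       (∀ ξ η : ℚ_[p], ‖η‖ ≤ (p : ℝ) ^ (-N) →
          padicFourier p μ φ (ξ + η) = padicFourier p μ φ ξ)) := by
  constructor
  · rintro ⟨h1, h2⟩
    exact ⟨PadicProof.fourier_vanish p μ φ l h2, PadicProof.fourier_invariant p μ φ N h1⟩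
  · rintro ⟨h1, h2⟩
    have hdf := PadicProof.double_fourier p μ hμ φ hlc hcs
    have g1 : ∀ ξ : ℚ_[p], ¬ ‖ξ‖ ≤ (p : ℝ) ^ N →
        padicFourier p μ (padicFourier p μ φ) ξ = 0 := by
      intro ξ hξ
      exact PadicProof.fourier_vanish p μ _ (-N) h2 ξ (by rwa [neg_neg])
    have g2 : ∀ ξ η : ℚ_[p], ‖η‖ ≤ (p : ℝ) ^ l →
        padicFourier p μ (padicFourier p μ φ) (ξ + η)
          = padicFourier p μ (padicFourier p μ φ) ξ := by
      intro ξ η hη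
      exact PadicProof.fourier_invariant p μ _ (-l) h1 ξ η (by rwa [neg_neg])
    constructor
    · intro x hx
      have := g1 (-x) (by rwa [norm_neg])
      rwa [hdf, neg_neg] at this
    · intro x y hy
      have := g2 (-x) (-y) (by rwa [norm_neg])
      rw [hdf, hdf, neg_neg, neg_add, neg_neg, neg_neg] at this
      exact this
end
end

section
/- For every prime p, every k ∈ {1,…,p−1}, every j ∈ ℤ, every a ∈ I_p, and every ξ ∈ ℚ_p, the p-adic Fourier transform of the Kozyrev wavelet ψ^{(0)}_{k;ja} is given by 𝓕_p[ψ^{(0)}_{k;ja}](ξ) = p^{−j/2} · χ_p(p^j a ξ) · 1_{ℤ_p}(p^{−1}k + p^j ξ). -/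
open MeasureTheory Complex
open scoped Classical

set_option maxHeartbeats 1000000

noncomputable section

variable (p : ℕ) [Fact p.Prime]

namespace KAux

lemma hp1R : (1:ℝ) < p := by exact_mod_cast (Fact.out : p.Prime).one_lt
lemma hp0R : (0:ℝ) < p := lt_trans one_pos (hp1R p)
lemma hpneQ : (p : ℚ_[p]) ≠ 0 := Nat.cast_ne_zero.mpr (Fact.out : p.Prime).pos.ne'
lemma hpneRat : (p : ℚ) ≠ 0 := Nat.cast_ne_zero.mpr (Fact.out : p.Prime).pos.ne'

lemma rat_int_of_norm_le {q : ℚ} (m : ℤ) (n : ℕ) (hq : q = m / p ^ n)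
    (h : ‖((q : ℚ) : ℚ_[p])‖ ≤ 1) : ∃ z : ℤ, q = z := by
  have hm : (m : ℚ) = q * p ^ n := by
    rw [hq, div_mul_cancel₀ _ (pow_ne_zero n (hpneRat p))]
  have hcast : ((m : ℤ) : ℚ_[p]) = ((q : ℚ) : ℚ_[p]) * (p : ℚ_[p]) ^ n := by
    have h' : ((m : ℚ) : ℚ_[p]) = (((q * p ^ n : ℚ)) : ℚ_[p]) := by rw [hm]
    push_cast at h'
    exact_mod_cast h'
  have hnorm : ‖((m : ℤ) : ℚ_[p])‖ ≤ (p : ℝ) ^ (-(n:ℤ)) := by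
    rw [hcast, norm_mul, Padic.norm_p_pow]
    calc ‖((q:ℚ) : ℚ_[p])‖ * (p:ℝ) ^ (-(n:ℤ)) ≤ 1 * (p:ℝ) ^ (-(n:ℤ)) :=
          mul_le_mul_of_nonneg_right h (le_of_lt (zpow_pos (hp0R p) _))
      _ = (p:ℝ) ^ (-(n:ℤ)) := one_mul _
  obtain ⟨z, hz⟩ := (Padic.norm_int_le_pow_iff_dvd m n).1 hnorm
  refine ⟨z, ?_⟩
  rw [hq, hz]
  push_cast
  exact mul_div_cancel_left₀ _ (pow_ne_zero n (hpneRat p))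

lemma fract_exists (x : ℚ_[p]) :
    ∃ r : ℚ, (0 ≤ r ∧ r < 1 ∧ ∃ (m : ℤ) (n : ℕ), r = m / p ^ n) ∧ ‖x - (r : ℚ_[p])‖ ≤ 1 := by
  obtain ⟨n, hn⟩ : ∃ n : ℕ, ‖x‖ ≤ (p:ℝ) ^ n := by
    obtain ⟨n, hn⟩ := exists_nat_ge ‖x‖
    refine ⟨n, hn.trans ?_⟩
    exact_mod_cast (Nat.lt_pow_self (n := n) (Fact.out : p.Prime).one_lt).le
  have hz1 : ‖(p : ℚ_[p]) ^ n * x‖ ≤ 1 := by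
    rw [norm_mul, Padic.norm_p_pow]
    calc (p:ℝ) ^ (-(n:ℤ)) * ‖x‖ ≤ (p:ℝ) ^ (-(n:ℤ)) * (p:ℝ) ^ (n:ℤ) :=
          mul_le_mul_of_nonneg_left (by exact_mod_cast hn) (le_of_lt (zpow_pos (hp0R p) _))
      _ = 1 := by
          rw [← zpow_add₀ (ne_of_gt (hp0R p))]; simp
  set z : ℤ_[p] := ⟨(p : ℚ_[p]) ^ n * x, hz1⟩ with hzdef
  set m : ℕ := z.appr n with hmdef
  refine ⟨(m : ℚ) / (p : ℚ) ^ n, ⟨⟨?_, ?_, ⟨(m : ℤ), n, by push_cast; try ring⟩⟩, ?_⟩⟩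
  · positivity
  · rw [div_lt_one (pow_pos (by exact_mod_cast hp0R p) n)]
    exact_mod_cast z.appr_lt n
  · have hspan := (PadicInt.norm_le_pow_iff_mem_span_pow (z - (m : ℤ_[p])) n).2 (PadicInt.appr_spec n z)
    have hcoe : ‖(z : ℚ_[p]) - (m : ℚ_[p])‖ ≤ (p:ℝ) ^ (-(n:ℤ)) := by
      have : ((z - (m : ℤ_[p]) : ℤ_[p]) : ℚ_[p]) = (z : ℚ_[p]) - (m : ℚ_[p]) := by push_cast; ring
      rw [← this, ← PadicInt.norm_def]
      exact hspan
    have hzcoe : (z : ℚ_[p]) = (p : ℚ_[p]) ^ n * x := rfl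
    have hxz : x = ((p : ℚ_[p]) ^ n)⁻¹ * (z : ℚ_[p]) := by
      rw [hzcoe, ← mul_assoc, inv_mul_cancel₀ (pow_ne_zero n (hpneQ p)), one_mul]
    have hr : (((m : ℚ) / (p : ℚ) ^ n : ℚ) : ℚ_[p]) = ((p : ℚ_[p]) ^ n)⁻¹ * (m : ℚ_[p]) := by
      push_cast [div_eq_inv_mul]
      try norm_cast
    rw [hxz, hr, ← mul_sub, norm_mul, norm_inv, Padic.norm_p_pow]
    calc ((p:ℝ) ^ (-(n:ℤ)))⁻¹ * ‖(z : ℚ_[p]) - (m : ℚ_[p])‖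
        ≤ ((p:ℝ) ^ (-(n:ℤ)))⁻¹ * (p:ℝ) ^ (-(n:ℤ)) :=
          mul_le_mul_of_nonneg_left hcoe (inv_nonneg.2 (le_of_lt (zpow_pos (hp0R p) _)))
      _ = 1 := inv_mul_cancel₀ (ne_of_gt (zpow_pos (hp0R p) _))

lemma padicFract_spec (x : ℚ_[p]) :
    (0 ≤ padicFract p x ∧ padicFract p x < 1 ∧
      ∃ (m : ℤ) (n : ℕ), padicFract p x = m / p ^ n) ∧
      ‖x - ((padicFract p x : ℚ) : ℚ_[p])‖ ≤ 1 := by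
  rw [padicFract, dif_pos (fract_exists p x)]
  exact (fract_exists p x).choose_spec

lemma exp_two_pi_int (z : ℤ) : Complex.exp (2 * Real.pi * Complex.I * (z : ℂ)) = 1 := by
  rw [mul_comm]
  exact Complex.exp_int_mul_two_pi_mul_I z

lemma padicChar_eq_one {x : ℚ_[p]} (h : ‖x‖ ≤ 1) : padicChar p x = 1 := by
  obtain ⟨⟨h0, h1, m, n, hform⟩, hnorm⟩ := padicFract_spec p x
  set r := padicFract p x with hr
  have hrle : ‖((r : ℚ) : ℚ_[p])‖ ≤ 1 := by
    have hre : ((r : ℚ) : ℚ_[p]) = x + (-(x - ((r:ℚ) : ℚ_[p]))) := by ring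
    rw [hre]
    exact le_trans (Padic.nonarchimedean _ _) (max_le h (by rwa [norm_neg]))
  obtain ⟨z, hz⟩ := rat_int_of_norm_le p m n hform hrle
  rw [padicChar, ← hr, hz]
  push_cast
  exact exp_two_pi_int z

lemma norm_add3 {a b c : ℚ_[p]} (ha : ‖a‖ ≤ 1) (hb : ‖b‖ ≤ 1) (hc : ‖c‖ ≤ 1) :
    ‖a + b + c‖ ≤ 1 :=
  le_trans (Padic.nonarchimedean _ _)
    (max_le (le_trans (Padic.nonarchimedean _ _) (max_le ha hb)) hc)

lemma padicChar_add (x y : ℚ_[p]) :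
    padicChar p (x + y) = padicChar p x * padicChar p y := by
  obtain ⟨⟨_, _, m1, n1, h1⟩, hx⟩ := padicFract_spec p x
  obtain ⟨⟨_, _, m2, n2, h2⟩, hy⟩ := padicFract_spec p y
  obtain ⟨⟨_, _, m3, n3, h3⟩, hxy⟩ := padicFract_spec p (x + y)
  set rx := padicFract p x
  set ry := padicFract p y
  set r := padicFract p (x + y)
  have hd : ∃ z : ℤ, rx + ry - r = z := by
    apply rat_int_of_norm_le p (m1 * (p:ℤ) ^ (n2 + n3) + m2 * (p:ℤ) ^ (n1 + n3)
      - m3 * (p:ℤ) ^ (n1 + n2)) (n1 + n2 + n3)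
    · rw [h1, h2, h3]
      have := hpneRat p
      field_simp
      push_cast
      ring
    · have hcast : (((rx + ry - r : ℚ)) : ℚ_[p]) =
          (-(x - ((rx:ℚ) : ℚ_[p]))) + (-(y - ((ry:ℚ) : ℚ_[p]))) + ((x + y) - ((r:ℚ) : ℚ_[p])) := by
        push_cast
        ring
      rw [hcast]
      exact norm_add3 p (by rwa [norm_neg]) (by rwa [norm_neg]) hxy
  obtain ⟨z, hz⟩ := hd
  have hrc : (r : ℂ) = (rx : ℂ) + (ry : ℂ) - (z : ℂ) := by
    have : r = rx + ry - z := by linarith [hz]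
    exact_mod_cast congrArg (fun q : ℚ => (q : ℂ)) this
  show Complex.exp _ = Complex.exp _ * Complex.exp _
  have harg : 2 * Real.pi * Complex.I * (r : ℂ) =
      2 * Real.pi * Complex.I * (rx : ℂ) + 2 * Real.pi * Complex.I * (ry : ℂ)
        + 2 * Real.pi * Complex.I * ((-z : ℤ) : ℂ) := by
    rw [hrc]; push_cast; ring
  rw [harg, Complex.exp_add, Complex.exp_add, exp_two_pi_int, mul_one]

lemma padicChar_ne_one {x : ℚ_[p]} (h : 1 < ‖x‖) : padicChar p x ≠ 1 := by
  obtain ⟨⟨h0, h1, m, n, hform⟩, hnorm⟩ := padicFract_spec p x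
  set r := padicFract p x with hrdef
  have hr : 1 < ‖((r : ℚ) : ℚ_[p])‖ := by
    by_contra hle
    push_neg at hle
    have hxle : ‖x‖ ≤ 1 := by
      have hre : x = (x - ((r:ℚ) : ℚ_[p])) + ((r:ℚ) : ℚ_[p]) := by ring
      rw [hre]
      exact le_trans (Padic.nonarchimedean _ _) (max_le hnorm hle)
    linarith
  intro hone
  rw [padicChar, Complex.exp_eq_one_iff] at hone
  obtain ⟨k, hk⟩ := hone
  have hne : (2 * (Real.pi : ℂ) * Complex.I) ≠ 0 := by
    simp [Real.pi_ne_zero, Complex.I_ne_zero]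
  have h2 : ((r : ℚ) : ℂ) = (k : ℂ) := by
    apply mul_left_cancel₀ hne
    rw [hk]
    ring
  have h3 : (r : ℚ) = (k : ℚ) := by exact_mod_cast h2
  have h4 : ‖((r : ℚ) : ℚ_[p])‖ ≤ 1 := by
    rw [h3]
    have : (((k : ℚ)) : ℚ_[p]) = ((k : ℤ) : ℚ_[p]) := by push_cast; rfl
    rw [this]
    exact Padic.norm_int_le_one k
  linarith

lemma padicChar_continuous : Continuous (padicChar p) := by
  rw [continuous_iff_continuousAt]
  intro x
  apply Filter.EventuallyEq.continuousAt (y := padicChar p x)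
  filter_upwards [Metric.ball_mem_nhds x one_pos] with y hy
  have hsplit : padicChar p y = padicChar p x * padicChar p (y - x) := by
    rw [← padicChar_add]
    congr 1
    ring
  have hyx : ‖y - x‖ ≤ 1 := le_of_lt (by rwa [Metric.mem_ball, dist_eq_norm] at hy)
  rw [hsplit, padicChar_eq_one p hyx, mul_one]


instance : TopologicalSpace.SeparableSpace ℚ_[p] := by
  have hdr : DenseRange (fun q : ℚ => (q : ℚ_[p])) := by
    rw [Metric.denseRange_iff]
    intro x r hr
    obtain ⟨q, hq⟩ := Padic.rat_dense p x hr
    exact ⟨q, by rwa [dist_eq_norm]⟩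
  exact ⟨⟨Set.range (fun q : ℚ => (q : ℚ_[p])), Set.countable_range _, hdr⟩⟩

instance : SecondCountableTopology ℚ_[p] := UniformSpace.secondCountable_of_separable _

/-- The closed ball `{x : ‖x‖ ≤ p ^ (-m)}`. -/
def Bz (m : ℤ) : Set ℚ_[p] := {x : ℚ_[p] | ‖x‖ ≤ (p:ℝ) ^ (-m)}

lemma Bz_measurable (m : ℤ) : MeasurableSet (Bz p m) :=
  (isClosed_le continuous_norm continuous_const).measurableSet

lemma Bz_compact (m : ℤ) : IsCompact (Bz p m) := by
  have h : Bz p m = Metric.closedBall 0 ((p:ℝ) ^ (-m)) := by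
    ext x
    simp [Bz, Metric.mem_closedBall, dist_eq_norm]
  rw [h]
  exact isCompact_closedBall _ _

lemma Bz_zero : Bz p 0 = {x : ℚ_[p] | ‖x‖ ≤ 1} := by
  simp [Bz]

variable (μ : Measure ℚ_[p]) [μ.IsAddHaarMeasure]

lemma measure_B_rec (m : ℤ) : μ (Bz p m) = p * μ (Bz p (m + 1)) := by
  classical
  set c : ℕ → ℚ_[p] := fun i => (i : ℚ_[p]) * (p : ℚ_[p]) ^ m with hc
  set C : ℕ → Set ℚ_[p] := fun i => (fun x => (-(c i)) + x) ⁻¹' (Bz p (m + 1)) with hC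
  have hmemC : ∀ i x, x ∈ C i ↔ ‖x - c i‖ ≤ (p:ℝ) ^ (-(m + 1)) := by
    intro i x
    simp only [hC, Set.mem_preimage, Bz, Set.mem_setOf_eq, neg_add_eq_sub]
  have hdecomp : Bz p m = ⋃ i ∈ Finset.range p, C i := by
    ext x
    simp only [Set.mem_iUnion, Finset.mem_range, exists_prop]
    constructor
    · intro hx
      have hz1 : ‖(p : ℚ_[p]) ^ (-m) * x‖ ≤ 1 := by
        rw [norm_mul, Padic.norm_p_zpow, neg_neg]
        calc (p:ℝ) ^ m * ‖x‖ ≤ (p:ℝ) ^ m * (p:ℝ) ^ (-m) :=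
              mul_le_mul_of_nonneg_left hx (le_of_lt (zpow_pos (hp0R p) _))
          _ = 1 := by rw [← zpow_add₀ (ne_of_gt (hp0R p))]; simp
      set z : ℤ_[p] := ⟨(p : ℚ_[p]) ^ (-m) * x, hz1⟩ with hzdef
      refine ⟨z.appr 1, by simpa using z.appr_lt 1, ?_⟩
      rw [hmemC]
      have hspan := (PadicInt.norm_le_pow_iff_mem_span_pow (z - ((z.appr 1 : ℕ) : ℤ_[p])) 1).2
        (PadicInt.appr_spec 1 z)
      have hcoe : ‖(z : ℚ_[p]) - ((z.appr 1 : ℕ) : ℚ_[p])‖ ≤ (p:ℝ) ^ (-(1:ℤ)) := by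
        have hh : ((z - ((z.appr 1 : ℕ) : ℤ_[p]) : ℤ_[p]) : ℚ_[p])
            = (z : ℚ_[p]) - ((z.appr 1 : ℕ) : ℚ_[p]) := by push_cast; ring
        rw [← hh, ← PadicInt.norm_def]
        exact_mod_cast hspan
      have hzcoe : (z : ℚ_[p]) = (p : ℚ_[p]) ^ (-m) * x := rfl
      have hxs : x - c (z.appr 1) = (p : ℚ_[p]) ^ m * ((z : ℚ_[p]) - ((z.appr 1 : ℕ) : ℚ_[p])) := by
        rw [hzcoe, hc, mul_sub, ← mul_assoc, ← zpow_add₀ (hpneQ p)]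
        simp [mul_comm]
      rw [hxs, norm_mul, Padic.norm_p_zpow]
      calc (p:ℝ) ^ (-m) * ‖(z : ℚ_[p]) - ((z.appr 1 : ℕ) : ℚ_[p])‖
          ≤ (p:ℝ) ^ (-m) * (p:ℝ) ^ (-(1:ℤ)) :=
            mul_le_mul_of_nonneg_left hcoe (le_of_lt (zpow_pos (hp0R p) _))
        _ = (p:ℝ) ^ (-(m + 1)) := by
            rw [← zpow_add₀ (ne_of_gt (hp0R p))]
            ring_nf
    · rintro ⟨i, hip, hi⟩
      rw [hmemC] at hi
      have hci : ‖c i‖ ≤ (p:ℝ) ^ (-m) := by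
        rw [hc, norm_mul, Padic.norm_p_zpow]
        calc ‖((i:ℕ) : ℚ_[p])‖ * (p:ℝ) ^ (-m) ≤ 1 * (p:ℝ) ^ (-m) := by
              apply mul_le_mul_of_nonneg_right _ (le_of_lt (zpow_pos (hp0R p) _))
              have : ((i:ℕ) : ℚ_[p]) = ((i:ℤ) : ℚ_[p]) := by push_cast; rfl
              rw [this]
              exact Padic.norm_int_le_one _
          _ = (p:ℝ) ^ (-m) := one_mul _
      have hre : x = (x - c i) + c i := by ring
      rw [Bz, Set.mem_setOf_eq, hre]
      refine le_trans (Padic.nonarchimedean _ _) (max_le (le_trans hi ?_) hci)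
      exact zpow_le_zpow_right₀ (le_of_lt (hp1R p)) (by omega)
  have hdisj : (↑(Finset.range p) : Set ℕ).PairwiseDisjoint C := by
    intro i hi j hj hij
    simp only [Finset.coe_range, Set.mem_Iio] at hi hj
    refine Set.disjoint_left.mpr fun x hxi hxj => hij ?_
    rw [hmemC] at hxi hxj
    have hsub : ‖c i - c j‖ ≤ (p:ℝ) ^ (-(m + 1)) := by
      have heq : c i - c j = (x - c j) + (-(x - c i)) := by ring
      rw [heq]
      refine le_trans (Padic.nonarchimedean _ _) (max_le hxj (by rwa [norm_neg]))
    set d : ℤ := (i:ℤ) - (j:ℤ) with hddef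
    have hdcast : ((d : ℤ) : ℚ_[p]) = ((i:ℕ) : ℚ_[p]) - ((j:ℕ) : ℚ_[p]) := by
      rw [hddef]; push_cast; ring
    have hij' : ‖((d : ℤ) : ℚ_[p])‖ < 1 := by
      have hcij : c i - c j = ((d : ℤ) : ℚ_[p]) * (p : ℚ_[p]) ^ m := by
        rw [hc, hdcast]; ring
      have h2 : ‖((d : ℤ) : ℚ_[p])‖ * (p:ℝ) ^ (-m) ≤ (p:ℝ) ^ (-(m+1)) := by
        rw [← Padic.norm_p_zpow, ← norm_mul, ← hcij]
        exact hsub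
      have h3 : ‖((d : ℤ) : ℚ_[p])‖ ≤ (p:ℝ) ^ (-(1:ℤ)) := by
        have h4 := mul_le_mul_of_nonneg_right h2 (le_of_lt (zpow_pos (hp0R p) m))
        rw [mul_assoc, ← zpow_add₀ (ne_of_gt (hp0R p))] at h4
        simpa [← zpow_add₀ (ne_of_gt (hp0R p)), add_comm] using h4
      refine lt_of_le_of_lt h3 ?_
      rw [zpow_neg, zpow_one]
      rw [inv_lt_one_iff₀]
      right
      exact hp1R p
    have hdvd : (p:ℤ) ∣ d := Padic.norm_intCast_lt_one_iff.1 hij'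
    have : (i:ℤ) = (j:ℤ) := by
      by_contra hne
      have hdne : d ≠ 0 := by rw [hddef]; exact sub_ne_zero.mpr hne
      have habs : 0 < |d| := abs_pos.2 hdne
      have hle := Int.le_of_dvd habs ((dvd_abs _ _).mpr hdvd)
      have hlt : |d| < p := by
        rw [hddef, abs_lt]
        omega
      omega
    exact_mod_cast this
  rw [hdecomp, measure_biUnion_finset hdisj (fun i _ => (Bz_measurable p (m+1)).preimage
    (measurable_const_add _))]
  have hval : ∀ i ∈ Finset.range p, μ (C i) = μ (Bz p (m+1)) := by
    intro i _
    rw [hC]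
    exact measure_preimage_add μ _ _
  rw [Finset.sum_congr rfl hval, Finset.sum_const, Finset.card_range, nsmul_eq_mul]

lemma measure_B (hμ : μ {x : ℚ_[p] | ‖x‖ ≤ 1} = 1) (m : ℤ) :
    μ (Bz p m) = (p : ENNReal) ^ (-m) := by
  have hp0 : (p : ENNReal) ≠ 0 := by
    exact_mod_cast (Fact.out : p.Prime).pos.ne'
  have hptop : (p : ENNReal) ≠ ⊤ := ENNReal.natCast_ne_top p
  induction m using Int.induction_on with
  | zero => rw [Bz_zero, hμ]; simp
  | succ n ih =>
    have hrec := measure_B_rec p μ n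
    rw [ih] at hrec
    have key : (p : ENNReal) * (p : ENNReal) ^ (-((n:ℤ)+1)) = (p : ENNReal) ^ (-(n:ℤ)) := by
      rw [show (p:ENNReal) * (p:ENNReal) ^ (-((n:ℤ)+1))
            = (p:ENNReal) ^ ((1:ℤ)) * (p:ENNReal) ^ (-((n:ℤ)+1)) by rw [zpow_one],
        ← ENNReal.zpow_add hp0 hptop]
      congr 1
      ring
    have key2 : (p : ENNReal) * μ (Bz p ((n:ℤ) + 1)) = (p : ENNReal) * (p : ENNReal) ^ (-((n:ℤ)+1)) := by
      rw [key, ← hrec]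
    exact (ENNReal.mul_right_inj hp0 hptop).1 key2
  | pred n ih =>
    have hrec := measure_B_rec p μ (-(n:ℤ) - 1)
    have he : (-(n:ℤ) - 1) + 1 = -(n:ℤ) := by ring
    rw [he, ih] at hrec
    rw [hrec, show (p:ENNReal) * (p:ENNReal) ^ (-(-(n:ℤ)))
          = (p:ENNReal) ^ ((1:ℤ)) * (p:ENNReal) ^ (-(-(n:ℤ))) by rw [zpow_one],
      ← ENNReal.zpow_add hp0 hptop]
    congr 1
    ring

lemma indZ_eq_indicator (x : ℚ_[p]) :
    indZ p x = Set.indicator {y : ℚ_[p] | ‖y‖ ≤ 1} (fun _ => (1:ℂ)) x := by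
  rw [indZ, Set.indicator_apply]
  rfl

lemma indZ_measurable : Measurable (indZ p) := by
  unfold indZ
  exact Measurable.ite (isClosed_le continuous_norm continuous_const).measurableSet
    measurable_const measurable_const

lemma indZ_add_of_le {x y : ℚ_[p]} (hy : ‖y‖ ≤ 1) : indZ p (x + y) = indZ p x := by
  unfold indZ
  congr 1
  simp only [eq_iff_iff]
  constructor
  · intro h
    have hre : x = (x + y) + (-y) := by ring
    rw [hre]
    exact le_trans (Padic.nonarchimedean _ _) (max_le h (by rwa [norm_neg]))
  · intro h
    exact le_trans (Padic.nonarchimedean _ _) (max_le h hy)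

lemma norm_ge_p_of_one_lt {c : ℚ_[p]} (h : 1 < ‖c‖) : (p:ℝ) ≤ ‖c‖ := by
  have hc0 : c ≠ 0 := by
    intro h0
    rw [h0, norm_zero] at h
    linarith
  rw [Padic.norm_eq_zpow_neg_valuation hc0] at h ⊢
  have hv : 0 < -c.valuation := by
    by_contra hle
    push_neg at hle
    have hh : (p:ℝ) ^ (-c.valuation) ≤ (p:ℝ) ^ (0:ℤ) :=
      zpow_le_zpow_right₀ (le_of_lt (hp1R p)) hle
    rw [zpow_zero] at hh
    linarith
  calc (p:ℝ) = (p:ℝ) ^ (1:ℤ) := (zpow_one _).symm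
    _ ≤ (p:ℝ) ^ (-c.valuation) := zpow_le_zpow_right₀ (le_of_lt (hp1R p)) (by omega)

lemma integral_char (hμ : μ {x : ℚ_[p] | ‖x‖ ≤ 1} = 1) (c : ℚ_[p]) :
    ∫ x, padicChar p (c * x) * indZ p x ∂μ = indZ p c := by
  by_cases hc : ‖c‖ ≤ 1
  · have heq : ∀ x, padicChar p (c * x) * indZ p x
        = Set.indicator {y : ℚ_[p] | ‖y‖ ≤ 1} (fun _ => (1:ℂ)) x := by
      intro x
      rw [indZ_eq_indicator]
      by_cases hx : ‖x‖ ≤ 1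
      · have hmem : x ∈ {y : ℚ_[p] | ‖y‖ ≤ 1} := hx
        rw [Set.indicator_of_mem hmem, mul_one]
        apply padicChar_eq_one
        rw [norm_mul]
        calc ‖c‖ * ‖x‖ ≤ 1 * 1 := mul_le_mul hc hx (norm_nonneg _) zero_le_one
          _ = 1 := one_mul _
      · have hmem : x ∉ {y : ℚ_[p] | ‖y‖ ≤ 1} := hx
        rw [Set.indicator_of_notMem hmem, mul_zero]
    rw [integral_congr_ae (Filter.Eventually.of_forall heq),
      integral_indicator_const _ (isClosed_le continuous_norm continuous_const).measurableSet,
      measureReal_def, hμ, indZ]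
    simp [hc]
  · push_neg at hc
    have hc0 : c ≠ 0 := by
      intro h0
      rw [h0, norm_zero] at hc
      linarith
    set y0 : ℚ_[p] := c⁻¹ * ((p:ℚ_[p]))⁻¹ with hy0def
    have hcy0 : c * y0 = ((p:ℚ_[p]))⁻¹ := by
      rw [hy0def, ← mul_assoc, mul_inv_cancel₀ hc0, one_mul]
    have hy0 : ‖y0‖ ≤ 1 := by
      rw [hy0def, norm_mul, norm_inv, norm_inv, Padic.norm_p, inv_inv]
      have hpc : (p:ℝ) ≤ ‖c‖ := norm_ge_p_of_one_lt p hc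
      rw [inv_mul_le_iff₀ (lt_of_le_of_lt zero_le_one hc), mul_one]
      exact hpc
    have hχ : padicChar p (c * y0) ≠ 1 := by
      apply padicChar_ne_one
      rw [hcy0, norm_inv, Padic.norm_p, inv_inv]
      exact_mod_cast (Fact.out : p.Prime).one_lt
    set I := ∫ x, padicChar p (c * x) * indZ p x ∂μ with hI
    have htrans : I = padicChar p (c * y0) * I := by
      have h1 : I = ∫ x, padicChar p (c * (x + y0)) * indZ p (x + y0) ∂μ := by
        rw [hI]
        exact (integral_add_right_eq_self (fun x => padicChar p (c * x) * indZ p x) y0).symm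
      have h2 : ∀ x, padicChar p (c * (x + y0)) * indZ p (x + y0)
          = padicChar p (c * y0) * (padicChar p (c * x) * indZ p x) := by
        intro x
        rw [indZ_add_of_le p hy0, show c * (x + y0) = c * x + c * y0 by ring, padicChar_add]
        ring
      conv_lhs => rw [h1]
      rw [integral_congr_ae (Filter.Eventually.of_forall h2), integral_const_mul]
    have hzero : (padicChar p (c * y0) - 1) * I = 0 := by
      rw [sub_mul, one_mul, ← htrans, sub_self]
    have hI0 : I = 0 := by
      rcases mul_eq_zero.mp hzero with h | h
      · exact absurd (sub_eq_zero.mp h) hχ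
      · exact h
    rw [hI0, indZ, if_neg (not_le.mpr hc)]

lemma map_mul_pzpow (hμ : μ {x : ℚ_[p] | ‖x‖ ≤ 1} = 1) (j : ℤ) :
    μ.map (fun y : ℚ_[p] => (p:ℚ_[p]) ^ j * y) = ((p : ENNReal) ^ j) • μ := by
  have hpne : ((p:ℚ_[p])) ^ j ≠ 0 := zpow_ne_zero _ (hpneQ p)
  set u : ℚ_[p]ˣ := Units.mk0 ((p:ℚ_[p]) ^ j) hpne with hu
  set e : ℚ_[p] ≃+ ℚ_[p] := (AddAut.mulLeft u : AddAut ℚ_[p]) with he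
  have hecoe : ∀ x, e x = (p:ℚ_[p]) ^ j * x := fun x => rfl
  have hce : Continuous e := by
    have : (e : ℚ_[p] → ℚ_[p]) = fun x => (p:ℚ_[p]) ^ j * x := funext hecoe
    rw [this]
    exact continuous_const.mul continuous_id
  have hcesymm : Continuous e.symm := by
    have : (e.symm : ℚ_[p] → ℚ_[p]) = fun x => ((p:ℚ_[p]) ^ j)⁻¹ * x := funext (fun x => rfl)
    rw [this]
    exact continuous_const.mul continuous_id
  haveI : (μ.map ⇑e).IsAddHaarMeasure := e.isAddHaarMeasure_map μ hce hcesymm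
  have huniq := Measure.isAddLeftInvariant_eq_smul (μ.map ⇑e) μ
  have hpre : (⇑e) ⁻¹' (Bz p 0) = Bz p (-j) := by
    ext y
    simp only [Set.mem_preimage, hecoe, Bz, Set.mem_setOf_eq, norm_mul,
      Padic.norm_p_zpow, neg_zero, zpow_zero, neg_neg]
    rw [show (p:ℝ) ^ (-j) * ‖y‖ ≤ 1 ↔ ((p:ℝ) ^ j)⁻¹ * ‖y‖ ≤ 1 by rw [zpow_neg],
      inv_mul_le_iff₀ (zpow_pos (hp0R p) j), mul_one]
  have hmapB : (μ.map ⇑e) (Bz p 0) = (p : ENNReal) ^ j := by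
    rw [Measure.map_apply hce.measurable (Bz_measurable p 0), hpre, measure_B p μ hμ, neg_neg]
  have hsmulB : ((μ.map ⇑e).addHaarScalarFactor μ • μ) (Bz p 0) = ((μ.map ⇑e).addHaarScalarFactor μ : ENNReal) := by
    rw [Measure.smul_apply, Bz_zero, hμ, ENNReal.smul_def, smul_eq_mul, mul_one]
  have hfactor : (((μ.map ⇑e).addHaarScalarFactor μ : NNReal) : ENNReal) = (p : ENNReal) ^ j := by
    rw [← hsmulB, ← huniq, hmapB]
  have hfun : (fun y : ℚ_[p] => (p:ℚ_[p]) ^ j * y) = ⇑e := (funext hecoe).symm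
  rw [hfun, huniq]
  ext s hs
  rw [Measure.smul_apply, Measure.smul_apply, ← hfactor]
  rfl

lemma toReal_zpow' (x : ENNReal) (n : ℤ) : (x ^ n).toReal = x.toReal ^ n := by
  cases n with
  | ofNat m => simp [ENNReal.toReal_pow]
  | negSucc m => simp [zpow_negSucc, ENNReal.toReal_inv, ENNReal.toReal_pow]

end KAux

/-- The `p`-adic Fourier transform of the Kozyrev wavelet
`ψ⁰_{k;ja}` is `ξ ↦ p^{-j/2} χ_p(p^j a ξ) 1_{ℤ_p}(p^{-1}k + p^j ξ)`; `μ` is the Haar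
measure with `μ(ℤ_p) = 1`. -/
theorem fourier_kozyrev (p : ℕ) [Fact p.Prime]
    (μ : MeasureTheory.Measure ℚ_[p]) [μ.IsAddHaarMeasure]
    (hμ : μ {x : ℚ_[p] | ‖x‖ ≤ 1} = 1)
    (k : ℕ) (hk1 : 1 ≤ k) (hk2 : k ≤ p - 1) (j : ℤ) (a : ℚ_[p]) (ha : a ∈ Ip p)
    (ξ : ℚ_[p]) :
    padicFourier p μ (kozyrev p k j a) ξ
      = (((p : ℝ) ^ (-(j : ℝ) / 2) : ℝ) : ℂ) * padicChar p ((p : ℚ_[p]) ^ j * a * ξ) *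
          indZ p ((k : ℚ_[p]) / (p : ℚ_[p]) + (p : ℚ_[p]) ^ j * ξ) := by
  classical
  have hp0 : (p : ENNReal) ≠ 0 := by exact_mod_cast (Fact.out : p.Prime).pos.ne'
  have hptop : (p : ENNReal) ≠ ⊤ := ENNReal.natCast_ne_top p
  have hpneQ : (p : ℚ_[p]) ≠ 0 := KAux.hpneQ p
  set T : ℚ_[p] → ℚ_[p] := fun y => (p:ℚ_[p]) ^ j * y with hT
  set f : ℚ_[p] → ℂ := fun x => padicChar p (ξ * x) * kozyrev p k j a x with hf
  have hgcont : Continuous (fun x : ℚ_[p] => (p:ℚ_[p]) ^ (-j) * x - a) :=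
    (continuous_const.mul continuous_id).sub continuous_const
  have hkozc : Continuous fun x : ℚ_[p] => (((p:ℝ) ^ ((j:ℝ)/2) : ℝ) : ℂ) *
      padicChar p ((k:ℚ_[p]) / (p:ℚ_[p]) * ((p:ℚ_[p]) ^ (-j) * x - a)) :=
    continuous_const.mul ((KAux.padicChar_continuous p).comp (continuous_const.mul hgcont))
  have hkoz : Measurable (kozyrev p k j a) :=
    hkozc.measurable.mul ((KAux.indZ_measurable p).comp hgcont.measurable)
  have hfm : Measurable f :=
    ((KAux.padicChar_continuous p).comp
      (continuous_const.mul continuous_id)).measurable.mul hkoz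
  have hTmeas : AEMeasurable T μ := (continuous_const.mul continuous_id).measurable.aemeasurable
  have hmap : μ.map T = ((p : ENNReal) ^ j) • μ := KAux.map_mul_pzpow p μ hμ j
  have hmuaux : ((p : ENNReal) ^ (-j)) * ((p : ENNReal) ^ j) = 1 := by
    rw [← ENNReal.zpow_add hp0 hptop]
    simp
  have hmueq : μ = ((p : ENNReal) ^ (-j)) • μ.map T := by
    rw [hmap, smul_smul, hmuaux, one_smul]
  have h1 : ∫ x, f x ∂μ = ((p : ENNReal) ^ (-j)).toReal • ∫ y, f (T y) ∂μ := by
    conv_lhs => rw [hmueq]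
    rw [integral_smul_measure, integral_map hTmeas hfm.stronglyMeasurable.aestronglyMeasurable]
  have h2 : ∫ y, f (T y) ∂μ = ∫ y, f (T (y + a)) ∂μ :=
    (integral_add_right_eq_self (fun y => f (T y)) a).symm
  set c : ℚ_[p] := (k:ℚ_[p]) / (p:ℚ_[p]) + (p:ℚ_[p]) ^ j * ξ with hc
  have h3 : ∀ y, f (T (y + a)) =
      ((((p : ℝ) ^ ((j:ℝ) / 2) : ℝ)) : ℂ) * padicChar p ((p:ℚ_[p]) ^ j * a * ξ) *
        (padicChar p (c * y) * indZ p y) := by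
    intro y
    simp only [hf, hT, kozyrev]
    have e1 : (p:ℚ_[p]) ^ (-j) * ((p:ℚ_[p]) ^ j * (y + a)) - a = y := by
      rw [← mul_assoc, ← zpow_add₀ hpneQ]
      simp
    rw [e1]
    have e2 : ξ * ((p:ℚ_[p]) ^ j * (y + a)) = (p:ℚ_[p]) ^ j * a * ξ + (p:ℚ_[p]) ^ j * ξ * y := by
      ring
    have e3 : c * y = (k:ℚ_[p]) / (p:ℚ_[p]) * y + (p:ℚ_[p]) ^ j * ξ * y := by rw [hc]; ring
    rw [e2, KAux.padicChar_add, e3, KAux.padicChar_add]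
    ring
  have h4 : ∫ y, f (T (y + a)) ∂μ =
      ((((p : ℝ) ^ ((j:ℝ) / 2) : ℝ)) : ℂ) * padicChar p ((p:ℚ_[p]) ^ j * a * ξ) * indZ p c := by
    rw [integral_congr_ae (Filter.Eventually.of_forall h3), integral_const_mul,
      KAux.integral_char p μ hμ c]
  have hscal : ((p : ENNReal) ^ (-j)).toReal = (p:ℝ) ^ (-(j:ℝ)) := by
    rw [KAux.toReal_zpow', ENNReal.toReal_natCast, ← Real.rpow_intCast]
    push_cast
    ring_nf
  have hrs : ((p : ENNReal) ^ (-j)).toReal * ((p:ℝ) ^ ((j:ℝ)/2)) = (p:ℝ) ^ (-(j:ℝ)/2) := by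
    rw [hscal, ← Real.rpow_add (KAux.hp0R p)]
    congr 1
    ring
  calc padicFourier p μ (kozyrev p k j a) ξ = ∫ x, f x ∂μ := rfl
    _ = ((p : ENNReal) ^ (-j)).toReal • ∫ y, f (T y) ∂μ := h1
    _ = ((p : ENNReal) ^ (-j)).toReal • ∫ y, f (T (y + a)) ∂μ := by rw [h2]
    _ = ((p : ENNReal) ^ (-j)).toReal •
          (((((p : ℝ) ^ ((j:ℝ) / 2) : ℝ)) : ℂ) * padicChar p ((p:ℚ_[p]) ^ j * a * ξ) * indZ p c) := by
        rw [h4]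
    _ = (((p : ℝ) ^ (-(j : ℝ) / 2) : ℝ) : ℂ) * padicChar p ((p : ℚ_[p]) ^ j * a * ξ) *
          indZ p ((k : ℚ_[p]) / (p : ℚ_[p]) + (p : ℚ_[p]) ^ j * ξ) := by
        rw [Complex.real_smul, ← hrs, Complex.ofReal_mul, hc]
        ring
end
end
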